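/- arXiv:1903.05151 — 8 statements merged into one kernel-verified Lean document; each statement's English description precedes it below -/
import Mathlib

section
/- Let a, b, A > 0 with b ≥ a. Then the function H(z) = Γ(a+Az)/Γ(b+Az) − Γ(a+A+Az)/Γ(b+A+Az) is non-negative and decreasing on (0,∞). -/
open Finset Filter Topology

private lemma factor_anti (a b j x y : ℝ) (ha : 0 < a) (hab : a ≤ b) (hj : 0 ≤ j)
    (hx : 0 < x) (hxy : x ≤ y) :
    (b + y + j) / (a + y + j) ≤ (b + x + j) / (a + x + j) := by
  rw [div_le_div_iff₀ (by linarith) (by linarith)]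
  nlinarith [mul_nonneg (sub_nonneg.2 hab) (sub_nonneg.2 hxy)]

private lemma factor_four (a b j x y A : ℝ) (ha : 0 < a) (hab : a ≤ b) (hj : 0 ≤ j)
    (hx : 0 < x) (hxy : x ≤ y) (hA : 0 < A) :
    (b + (x+A) + j) / (a + (x+A) + j) * ((b + y + j) / (a + y + j))
      ≤ (b + (y+A) + j) / (a + (y+A) + j) * ((b + x + j) / (a + x + j)) := by
  rw [div_mul_div_comm, div_mul_div_comm, div_le_div_iff₀ (mul_pos (by linarith) (by linarith)) (mul_pos (by linarith) (by linarith))]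
  nlinarith [mul_nonneg (mul_nonneg (sub_nonneg.2 hab) (sub_nonneg.2 hxy)) hA.le,
    sq_nonneg (x - y), sq_nonneg (a - b), mul_pos ha hA, mul_pos hx hA,
    mul_nonneg (mul_nonneg (mul_nonneg (sub_nonneg.2 hab) (sub_nonneg.2 hxy)) hA.le) hj,
    mul_nonneg (mul_nonneg (sub_nonneg.2 hab) (sub_nonneg.2 hxy)) hx.le]

private lemma prod_pos' (a x : ℝ) (ha : 0 < a) (hx : 0 < x) (n : ℕ) :
    0 < ∏ j ∈ range (n+1), (a + x + (j:ℝ)) := by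
  apply Finset.prod_pos
  intro j _
  have : (0:ℝ) ≤ j := Nat.cast_nonneg j
  linarith

private lemma ratio_tendsto (a b x : ℝ) (ha : 0 < a) (hb : 0 < b) (hx : 0 < x) :
    Tendsto (fun n : ℕ => (n:ℝ)^(a-b) * ∏ j ∈ range (n+1), ((b+x+j)/(a+x+j)))
      atTop (𝓝 (Real.Gamma (a+x) / Real.Gamma (b+x))) := by
  have h := (Real.GammaSeq_tendsto_Gamma (a+x)).div (Real.GammaSeq_tendsto_Gamma (b+x))
    (Real.Gamma_pos_of_pos (by linarith)).ne'
  refine h.congr' ?_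
  filter_upwards [eventually_ge_atTop 1] with n hn
  have hn0 : (0:ℝ) < n := by exact_mod_cast hn
  have hfact : (0:ℝ) < (n.factorial : ℝ) := by exact_mod_cast n.factorial_pos
  have hPa := prod_pos' a x ha hx n
  have hPb := prod_pos' b x hb hx n
  show Real.GammaSeq (a+x) n / Real.GammaSeq (b+x) n = _
  rw [Real.GammaSeq, Real.GammaSeq, Finset.prod_div_distrib,
    show a - b = (a+x) - (b+x) by ring, Real.rpow_sub hn0]
  field_simp

private lemma prod_anti (a b x y : ℝ) (ha : 0 < a) (hab : a ≤ b)
    (hx : 0 < x) (hxy : x ≤ y) (n : ℕ) :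
    ∏ j ∈ range (n+1), (b+y+(j:ℝ))/(a+y+j) ≤ ∏ j ∈ range (n+1), (b+x+(j:ℝ))/(a+x+j) := by
  apply Finset.prod_le_prod
  · intro j _
    have hj : (0:ℝ) ≤ j := Nat.cast_nonneg j
    have h1 : (0:ℝ) < a + y + j := by linarith
    have h2 : (0:ℝ) ≤ b + y + j := by linarith
    positivity
  · intro j _
    exact factor_anti a b j x y ha hab (Nat.cast_nonneg j) hx hxy

private lemma seq_diff_anti (a b A x y : ℝ) (ha : 0 < a) (hab : a ≤ b) (hA : 0 < A)
    (hx : 0 < x) (hxy : x ≤ y) (n : ℕ) :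
    (n:ℝ)^(a-b) * ∏ j ∈ range (n+1), ((b+y+j)/(a+y+j))
      - (n:ℝ)^(a-b) * ∏ j ∈ range (n+1), ((b+(y+A)+j)/(a+(y+A)+j))
    ≤ (n:ℝ)^(a-b) * ∏ j ∈ range (n+1), ((b+x+j)/(a+x+j))
      - (n:ℝ)^(a-b) * ∏ j ∈ range (n+1), ((b+(x+A)+j)/(a+(x+A)+j)) := by
  have hb : 0 < b := lt_of_lt_of_le ha hab
  set Px := ∏ j ∈ range (n+1), ((b+x+(j:ℝ))/(a+x+j)) with hPx
  set Py := ∏ j ∈ range (n+1), ((b+y+(j:ℝ))/(a+y+j)) with hPy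
  set PxA := ∏ j ∈ range (n+1), ((b+(x+A)+(j:ℝ))/(a+(x+A)+j)) with hPxA
  set PyA := ∏ j ∈ range (n+1), ((b+(y+A)+(j:ℝ))/(a+(y+A)+j)) with hPyA
  have hPypos : 0 < Py := by
    rw [hPy]
    apply Finset.prod_pos
    intro j _
    have hj : (0:ℝ) ≤ j := Nat.cast_nonneg j
    have h1 : (0:ℝ) < a + y + j := by linarith
    have h2 : (0:ℝ) < b + y + j := by linarith
    positivity
  have h2 : Py ≤ Px := prod_anti a b x y ha hab hx hxy n
  have h3 : PyA ≤ Py := prod_anti a b y (y+A) ha hab (by linarith) (by linarith) n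
  have h1 : PxA * Py ≤ PyA * Px := by
    rw [hPx, hPy, hPxA, hPyA, ← Finset.prod_mul_distrib, ← Finset.prod_mul_distrib]
    apply Finset.prod_le_prod
    · intro j _
      have hj : (0:ℝ) ≤ j := Nat.cast_nonneg j
      have h1 : (0:ℝ) < a + (x+A) + j := by linarith
      have h2 : (0:ℝ) ≤ b + (x+A) + j := by linarith
      have h3 : (0:ℝ) < a + y + j := by linarith
      have h4 : (0:ℝ) ≤ b + y + j := by linarith
      positivity
    · intro j _
      exact factor_four a b j x y A ha hab (Nat.cast_nonneg j) hx hxy hA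
  have hkey : Py - PyA ≤ Px - PxA := by nlinarith
  have hc : (0:ℝ) ≤ (n:ℝ)^(a-b) := Real.rpow_nonneg (Nat.cast_nonneg n) _
  nlinarith [mul_le_mul_of_nonneg_left hkey hc]

theorem H_nonneg_and_decreasing (a b A : ℝ) (ha : 0 < a) (hb : 0 < b) (hA : 0 < A)
    (hba : a ≤ b) :
    (∀ z ∈ Set.Ioi (0 : ℝ),
      0 ≤ Real.Gamma (a + A * z) / Real.Gamma (b + A * z)
          - Real.Gamma (a + A + A * z) / Real.Gamma (b + A + A * z)) ∧
    AntitoneOn (fun z : ℝ =>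
      Real.Gamma (a + A * z) / Real.Gamma (b + A * z)
        - Real.Gamma (a + A + A * z) / Real.Gamma (b + A + A * z)) (Set.Ioi 0) := by
  -- general limit statement for differences
  have key : ∀ x y : ℝ, 0 < x → x ≤ y →
      Real.Gamma (a + y) / Real.Gamma (b + y) - Real.Gamma (a + (y+A)) / Real.Gamma (b + (y+A))
      ≤ Real.Gamma (a + x) / Real.Gamma (b + x)
        - Real.Gamma (a + (x+A)) / Real.Gamma (b + (x+A)) := by
    intro x y hx hxy
    have hy : 0 < y := lt_of_lt_of_le hx hxy
    have T1 := (ratio_tendsto a b x ha hb hx).sub (ratio_tendsto a b (x+A) ha hb (by linarith))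
    have T2 := (ratio_tendsto a b y ha hb hy).sub (ratio_tendsto a b (y+A) ha hb (by linarith))
    exact le_of_tendsto_of_tendsto' T2 T1
      (fun n => seq_diff_anti a b A x y ha hba hA hx hxy n)
  have nonneg : ∀ x : ℝ, 0 < x →
      0 ≤ Real.Gamma (a + x) / Real.Gamma (b + x)
        - Real.Gamma (a + (x+A)) / Real.Gamma (b + (x+A)) := by
    intro x hx
    have T1 := (ratio_tendsto a b x ha hb hx).sub (ratio_tendsto a b (x+A) ha hb (by linarith))
    refine ge_of_tendsto' T1 (fun n => ?_)
    have h := prod_anti a b x (x+A) ha hba hx (by linarith) n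
    have hc : (0:ℝ) ≤ (n:ℝ)^(a-b) := Real.rpow_nonneg (Nat.cast_nonneg n) _
    nlinarith [mul_le_mul_of_nonneg_left h hc]
  constructor
  · intro z hz
    have hz' : (0:ℝ) < z := hz
    have hx : 0 < A * z := by positivity
    have := nonneg (A * z) hx
    rw [show a + (A*z + A) = a + A + A*z by ring, show b + (A*z + A) = b + A + A*z by ring] at this
    exact this
  · intro z₁ hz₁ z₂ hz₂ hz
    have hz₁' : (0:ℝ) < z₁ := hz₁
    have hx : 0 < A * z₁ := by positivity
    have hxy : A * z₁ ≤ A * z₂ := by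
      have : (0:ℝ) < z₂ := hz₂
      nlinarith
    have := key (A * z₁) (A * z₂) hx hxy
    simpa [show a + (A*z₁ + A) = a + A + A*z₁ by ring, show b + (A*z₁ + A) = b + A + A*z₁ by ring,
      show a + (A*z₂ + A) = a + A + A*z₂ by ring, show b + (A*z₂ + A) = b + A + A*z₂ by ring]
      using this
end

section
/- Let a, b, A > 0 with b ≥ a. Then for all z > 0, the quantity Φ(z) = ψ(b+A+Az) − ψ(a+A+Az) + ψ(a+Az) − ψ(b+Az) satisfies Φ(z) ≤ 0, where ψ is the digamma function. -/
open Set MeasureTheory Real Filter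

noncomputable section DigammaAux

/-- The real Beta integrand. -/
private def betaFn (A x t : ℝ) : ℝ := t ^ (x - 1) * (1 - t) ^ (A - 1)

/-- The real Beta function as an integral over `Ioo 0 1`. -/
private def rbeta (A x : ℝ) : ℝ := ∫ t in Ioo (0:ℝ) 1, betaFn A x t

private lemma betaFn_integrableOn {A x : ℝ} (hA : 0 < A) (hx : 0 < x) :
    IntegrableOn (betaFn A x) (Ioo (0:ℝ) 1) volume := by
  have h := (Complex.betaIntegral_convergent (u := (x:ℂ)) (v := (A:ℂ))
      (by simpa using hx) (by simpa using hA)).norm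
  rw [intervalIntegrable_iff_integrableOn_Ioc_of_le zero_le_one] at h
  refine ((h.mono_set Ioo_subset_Ioc_self).congr_fun (fun t ht => ?_) measurableSet_Ioo)
  obtain ⟨ht0, ht1⟩ := ht
  have h1t : (0:ℝ) < 1 - t := by linarith
  simp only [norm_mul, betaFn]
  rw [show ((1:ℂ) - (t:ℂ)) = ((1 - t : ℝ) : ℂ) by push_cast; ring]
  rw [Complex.norm_cpow_eq_rpow_re_of_pos ht0, Complex.norm_cpow_eq_rpow_re_of_pos h1t]
  simp

private lemma Gamma_mul_Gamma_eq_rbeta {A x : ℝ} (hA : 0 < A) (hx : 0 < x) :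
    Real.Gamma x * Real.Gamma A = Real.Gamma (x + A) * rbeta A x := by
  have h := Complex.Gamma_mul_Gamma_eq_betaIntegral (s := (x:ℂ)) (t := (A:ℂ))
      (by simpa using hx) (by simpa using hA)
  have hβ : Complex.betaIntegral (x:ℂ) (A:ℂ) = ((rbeta A x : ℝ) : ℂ) := by
    rw [Complex.betaIntegral, intervalIntegral.integral_of_le zero_le_one,
      integral_Ioc_eq_integral_Ioo]
    rw [show ((rbeta A x : ℝ) : ℂ) = ∫ t in Ioo (0:ℝ) 1, ((betaFn A x t : ℝ) : ℂ) from
      (integral_ofReal).symm]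
    refine setIntegral_congr_fun measurableSet_Ioo fun t ht => ?_
    obtain ⟨ht0, ht1⟩ := ht
    have h1t : (0:ℝ) < 1 - t := by linarith
    rw [betaFn, Complex.ofReal_mul, Complex.ofReal_cpow ht0.le, Complex.ofReal_cpow h1t.le]
    push_cast
    ring_nf
  rw [hβ] at h
  have := h
  rw [← Complex.ofReal_add, Complex.Gamma_ofReal, Complex.Gamma_ofReal,
    Complex.Gamma_ofReal, ← Complex.ofReal_mul, ← Complex.ofReal_mul] at this
  exact_mod_cast this

private lemma rbeta_pos {A x : ℝ} (hA : 0 < A) (hx : 0 < x) : 0 < rbeta A x := by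
  have h := Gamma_mul_Gamma_eq_rbeta hA hx
  have h1 : 0 < Real.Gamma x * Real.Gamma A :=
    mul_pos (Real.Gamma_pos_of_pos hx) (Real.Gamma_pos_of_pos hA)
  have h2 : 0 < Real.Gamma (x + A) := Real.Gamma_pos_of_pos (by linarith)
  nlinarith

/-- Hölder's inequality gives log-convexity of the Beta function in its first argument. -/
private lemma rbeta_holder {A x y p q : ℝ} (hA : 0 < A) (hx : 0 < x) (hy : 0 < y)
    (hp : 0 < p) (hq : 0 < q) (hpq : p + q = 1) :
    rbeta A (p * x + q * y) ≤ rbeta A x ^ p * rbeta A y ^ q := by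
  have e : Real.HolderConjugate (1 / p) (1 / q) := Real.holderConjugate_one_div hp hq hpq
  -- measurability and positivity of betaFn on `Ioo 0 1`
  have contOn : ∀ u : ℝ, ContinuousOn (betaFn A u) (Ioo (0:ℝ) 1) := by
    intro u
    apply ContinuousOn.mul
    · exact fun t ht => (Real.continuousAt_rpow_const t (u-1) (Or.inl ht.1.ne')).continuousWithinAt
    · exact fun t ht => (ContinuousAt.continuousWithinAt
        ((Real.continuousAt_rpow_const (1 - t) (A-1)
          (Or.inl (by have := ht.2; intro h; linarith [sub_eq_zero.mp h]))).comp
          (by fun_prop)))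
  have posf : ∀ u t : ℝ, t ∈ Ioo (0:ℝ) 1 → 0 ≤ betaFn A u t := fun u t ht =>
    mul_nonneg (Real.rpow_nonneg ht.1.le _) (Real.rpow_nonneg (by linarith [ht.2]) _)
  -- `betaFn A u ^ c` is in ℒ^(1/c)
  have f_mem_Lp : ∀ {u c : ℝ}, 0 < u → 0 < c →
      MemLp (fun t => betaFn A u t ^ c) (ENNReal.ofReal (1 / c))
        (volume.restrict (Ioo (0:ℝ) 1)) := by
    intro u c hu hc
    have A1 : ENNReal.ofReal (1 / c) ≠ 0 := by
      rwa [Ne, ENNReal.ofReal_eq_zero, not_le, one_div_pos]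
    have B1 : ENNReal.ofReal (1 / c) ≠ ⊤ := ENNReal.ofReal_ne_top
    have meas : AEStronglyMeasurable (fun t => betaFn A u t ^ c)
        (volume.restrict (Ioo (0:ℝ) 1)) :=
      (((contOn u).rpow_const (fun t ht => Or.inr hc.le)).aestronglyMeasurable measurableSet_Ioo)
    rw [← memLp_norm_rpow_iff meas A1 B1, ENNReal.toReal_ofReal (by positivity),
      ENNReal.div_self A1 B1, memLp_one_iff_integrable]
    apply Integrable.congr (betaFn_integrableOn hA hu)
    refine eventuallyEq_of_mem (self_mem_ae_restrict measurableSet_Ioo) fun t ht => ?_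
    have h0 : 0 ≤ betaFn A u t := posf u t ht
    rw [Real.norm_of_nonneg (Real.rpow_nonneg h0 c), ← Real.rpow_mul h0,
      mul_one_div_cancel hc.ne', Real.rpow_one]
  -- apply Hölder
  have key := MeasureTheory.integral_mul_le_Lp_mul_Lq_of_nonneg e
      (f := fun t => betaFn A x t ^ p) (g := fun t => betaFn A y t ^ q)
      ((ae_restrict_iff' measurableSet_Ioo).mpr (Eventually.of_forall fun t ht =>
        Real.rpow_nonneg (posf x t ht) p))
      ((ae_restrict_iff' measurableSet_Ioo).mpr (Eventually.of_forall fun t ht =>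
        Real.rpow_nonneg (posf y t ht) q))
      (f_mem_Lp hx hp) (f_mem_Lp hy hq)
  rw [one_div_one_div, one_div_one_div] at key
  calc rbeta A (p * x + q * y)
      = ∫ t in Ioo (0:ℝ) 1, betaFn A x t ^ p * betaFn A y t ^ q := by
        refine setIntegral_congr_fun measurableSet_Ioo fun t ht => ?_
        obtain ⟨ht0, ht1⟩ := ht
        have h1t : (0:ℝ) < 1 - t := by linarith
        simp only [betaFn]
        rw [Real.mul_rpow (Real.rpow_nonneg ht0.le _) (Real.rpow_nonneg h1t.le _),
          Real.mul_rpow (Real.rpow_nonneg ht0.le _) (Real.rpow_nonneg h1t.le _),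
          ← Real.rpow_mul ht0.le, ← Real.rpow_mul h1t.le,
          ← Real.rpow_mul ht0.le, ← Real.rpow_mul h1t.le,
          mul_mul_mul_comm, ← Real.rpow_add ht0, ← Real.rpow_add h1t,
          show (x-1)*p + (y-1)*q = p*x+q*y-1 by nlinarith,
          show (A-1)*p + (A-1)*q = A-1 by nlinarith]
    _ ≤ (∫ t in Ioo (0:ℝ) 1, (betaFn A x t ^ p) ^ (1/p)) ^ p
        * (∫ t in Ioo (0:ℝ) 1, (betaFn A y t ^ q) ^ (1/q)) ^ q := key
    _ = rbeta A x ^ p * rbeta A y ^ q := by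
        congr 1 <;> congr 1 <;>
          refine setIntegral_congr_fun measurableSet_Ioo fun t ht => ?_
        · rw [← Real.rpow_mul (posf x t ht), mul_one_div_cancel hp.ne', Real.rpow_one]
        · rw [← Real.rpow_mul (posf y t ht), mul_one_div_cancel hq.ne', Real.rpow_one]

private lemma concaveOn_logGamma_diff {A : ℝ} (hA : 0 < A) :
    ConcaveOn ℝ (Ioi (0:ℝ))
      (fun x => Real.log (Real.Gamma (x + A)) - Real.log (Real.Gamma x)) := by
  have hGval : ∀ x : ℝ, 0 < x →
      Real.log (Real.Gamma (x + A)) - Real.log (Real.Gamma x)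
        = Real.log (Real.Gamma A) - Real.log (rbeta A x) := by
    intro x hx
    have h := Gamma_mul_Gamma_eq_rbeta hA hx
    have h1 := Real.Gamma_pos_of_pos hx
    have h2 := Real.Gamma_pos_of_pos hA
    have h3 := Real.Gamma_pos_of_pos (show 0 < x + A by linarith)
    have h4 := rbeta_pos hA hx
    have := congrArg Real.log h
    rw [Real.log_mul h1.ne' h2.ne', Real.log_mul h3.ne' h4.ne'] at this
    linarith
  refine concaveOn_iff_forall_pos.mpr ⟨convex_Ioi _, fun x hx y hy p q hp hq hpq => ?_⟩
  simp only [smul_eq_mul, mem_Ioi] at hx hy ⊢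
  have hxy : 0 < p * x + q * y := by positivity
  rw [hGval _ hx, hGval _ hy, hGval _ hxy]
  have hlog : Real.log (rbeta A (p * x + q * y))
      ≤ p * Real.log (rbeta A x) + q * Real.log (rbeta A y) := by
    rw [← Real.log_rpow (rbeta_pos hA hx), ← Real.log_rpow (rbeta_pos hA hy), ← Real.log_mul
      (Real.rpow_pos_of_pos (rbeta_pos hA hx) p).ne' (Real.rpow_pos_of_pos (rbeta_pos hA hy) q).ne']
    exact Real.log_le_log (rbeta_pos hA hxy) (rbeta_holder hA hx hy hp hq hpq)
  have hsum : p * Real.log (Real.Gamma A) + q * Real.log (Real.Gamma A)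
      = Real.log (Real.Gamma A) := by rw [← add_mul, hpq, one_mul]
  linarith

end DigammaAux

theorem digamma_comb_nonpos (a b A : ℝ) (ha : 0 < a) (hb : 0 < b) (hA : 0 < A)
    (hba : a ≤ b) (z : ℝ) (hz : 0 < z) :
    (fun x => deriv Real.Gamma x / Real.Gamma x) (b + A + A * z)
      - (fun x => deriv Real.Gamma x / Real.Gamma x) (a + A + A * z)
      + (fun x => deriv Real.Gamma x / Real.Gamma x) (a + A * z)
      - (fun x => deriv Real.Gamma x / Real.Gamma x) (b + A * z) ≤ 0 := by
  set ψ : ℝ → ℝ := fun x => deriv Real.Gamma x / Real.Gamma x with hψ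
  have hlog : ∀ x : ℝ, 0 < x → HasDerivAt (fun y => Real.log (Real.Gamma y)) (ψ x) x := by
    intro x hx
    exact (Real.differentiableAt_Gamma (fun m => by
      have hm : (0:ℝ) ≤ m := m.cast_nonneg
      intro h; rw [h] at hx; linarith)).hasDerivAt.log
      (Real.Gamma_pos_of_pos hx).ne'
  set G : ℝ → ℝ := fun x => Real.log (Real.Gamma (x + A)) - Real.log (Real.Gamma x) with hG
  have hG' : ∀ x : ℝ, 0 < x → HasDerivAt G (ψ (x + A) - ψ x) x := by
    intro x hx
    exact ((hlog (x + A) (by linarith)).comp_add_const x A).sub (hlog x hx)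
  have hconc := concaveOn_logGamma_diff hA
  have hanti := hconc.antitoneOn_deriv (fun x hx => (hG' x hx).differentiableAt)
  have h1 : 0 < a + A * z := by positivity
  have h2 : 0 < b + A * z := by positivity
  have key := hanti (Set.mem_Ioi.mpr h1) (Set.mem_Ioi.mpr h2) (by linarith)
  rw [(hG' _ h1).deriv, (hG' _ h2).deriv] at key
  have e1 : a + A * z + A = a + A + A * z := by ring
  have e2 : b + A * z + A = b + A + A * z := by ring
  rw [e1, e2] at key
  linarith
end

section
/- Let p ≥ 1 and let 0 < aᵢ ≤ bᵢ and Aᵢ > 0 for i = 1,…,p. Define for k ≥ 1 the sequence U_k = (1/(k−1)!) · ∏_{i=1}^p [Γ(bᵢ)Γ(aᵢ + kAᵢ)] / [Γ(aᵢ)Γ(bᵢ + kAᵢ)], and U_0 = 1. Then (U_k)_{k≥0} is a decreasing sequence with U_0 = 1 ≥ U_1 and U_k ≤ 2 for all k (in fact U_k ≤ 1 for all k ≥ 0). -/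
open Real

private lemma convex_pair {f : ℝ → ℝ} (hf : ConvexOn ℝ (Set.Ioi 0) f)
    {s t u v : ℝ} (hs : 0 < s) (ht : 0 < t) (hsu : s ≤ u) (hut : u ≤ t)
    (hsv : s ≤ v) (hvt : v ≤ t) (hsum : u + v = s + t) :
    f u + f v ≤ f s + f t := by
  rcases eq_or_lt_of_le (hsu.trans hut) with h | hst
  · have hu : u = s := le_antisymm (h ▸ hut) hsu
    have hv : v = t := by linarith
    rw [hu, hv]
  · set θ : ℝ := (t - u) / (t - s) with hθ
    have hts : 0 < t - s := by linarith
    have hθ0 : 0 ≤ θ := div_nonneg (by linarith) hts.le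
    have hθ1 : θ ≤ 1 := (div_le_one hts).mpr (by linarith)
    have hθs : θ + (1 - θ) = 1 := by ring
    have hu : u = θ * s + (1 - θ) * t := by
      have h' : θ * (t - s) = t - u := by rw [hθ]; exact div_mul_cancel₀ _ hts.ne'
      linear_combination h'
    have hv : v = (1 - θ) * s + θ * t := by
      have : v = s + t - u := by linarith
      rw [this, hu]; ring
    have h1 := hf.2 (Set.mem_Ioi.mpr hs) (Set.mem_Ioi.mpr ht) hθ0 (by linarith) hθs
    have h2 := hf.2 (Set.mem_Ioi.mpr hs) (Set.mem_Ioi.mpr ht) (by linarith : (0:ℝ) ≤ 1 - θ) hθ0 (by linarith)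
    simp only [smul_eq_mul] at h1 h2
    rw [hu, hv]
    nlinarith [h1, h2]

private lemma gamma_cross {a b x y : ℝ} (ha : 0 < a) (hab : a ≤ b)
    (hx : 0 ≤ x) (hxy : x ≤ y) :
    Real.Gamma (a + y) * Real.Gamma (b + x) ≤ Real.Gamma (a + x) * Real.Gamma (b + y) := by
  have hs : 0 < a + x := by linarith
  have ht : 0 < b + y := by linarith
  have hu : 0 < a + y := by linarith
  have hv : 0 < b + x := by linarith
  have key := convex_pair Real.convexOn_log_Gamma hs ht
    (by linarith : a + x ≤ a + y) (by linarith : a + y ≤ b + y)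
    (by linarith : a + x ≤ b + x) (by linarith : b + x ≤ b + y)
    (by ring)
  simp only [Function.comp_apply] at key
  have := Real.exp_le_exp.mpr key
  rwa [Real.exp_add, Real.exp_add, Real.exp_log (Real.Gamma_pos_of_pos hu),
    Real.exp_log (Real.Gamma_pos_of_pos hv), Real.exp_log (Real.Gamma_pos_of_pos hs),
    Real.exp_log (Real.Gamma_pos_of_pos ht)] at this

private lemma factor_mono {a b x y : ℝ} (ha : 0 < a) (hab : a ≤ b)
    (hx : 0 ≤ x) (hxy : x ≤ y) :
    Real.Gamma b * Real.Gamma (a + y) / (Real.Gamma a * Real.Gamma (b + y)) ≤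
      Real.Gamma b * Real.Gamma (a + x) / (Real.Gamma a * Real.Gamma (b + x)) := by
  have hb : 0 < b := lt_of_lt_of_le ha hab
  have hGa := Real.Gamma_pos_of_pos ha
  have hGb := Real.Gamma_pos_of_pos hb
  have hGbx := Real.Gamma_pos_of_pos (show (0:ℝ) < b + x by linarith)
  have hGby := Real.Gamma_pos_of_pos (show (0:ℝ) < b + y by linarith)
  rw [div_le_div_iff₀ (by positivity) (by positivity)]
  have := gamma_cross ha hab hx hxy
  nlinarith [mul_pos hGa hGb]

private lemma factor_le_one {a b x : ℝ} (ha : 0 < a) (hab : a ≤ b) (hx : 0 ≤ x) :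
    Real.Gamma b * Real.Gamma (a + x) / (Real.Gamma a * Real.Gamma (b + x)) ≤ 1 := by
  have h := factor_mono ha hab le_rfl hx
  have hb : 0 < b := lt_of_lt_of_le ha hab
  have heq : Real.Gamma b * Real.Gamma (a + 0) / (Real.Gamma a * Real.Gamma (b + 0)) = 1 := by
    rw [add_zero, add_zero, mul_comm, div_self
      (mul_pos (Real.Gamma_pos_of_pos ha) (Real.Gamma_pos_of_pos hb)).ne']
  rwa [heq] at h

private lemma factor_nonneg {a b x : ℝ} (ha : 0 < a) (hab : a ≤ b) (hx : 0 ≤ x) :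
    0 ≤ Real.Gamma b * Real.Gamma (a + x) / (Real.Gamma a * Real.Gamma (b + x)) := by
  have hb : 0 < b := lt_of_lt_of_le ha hab
  have := Real.Gamma_pos_of_pos ha
  have := Real.Gamma_pos_of_pos hb
  have := Real.Gamma_pos_of_pos (show (0:ℝ) < a + x by linarith)
  have := Real.Gamma_pos_of_pos (show (0:ℝ) < b + x by linarith)
  positivity

theorem U_decreasing_bounded (p : ℕ) (hp : 1 ≤ p) (a b A : Fin p → ℝ)
    (ha : ∀ i, 0 < a i) (hab : ∀ i, a i ≤ b i) (hA : ∀ i, 0 < A i)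
    (U : ℕ → ℝ) (hU0 : U 0 = 1)
    (hUk : ∀ k, 1 ≤ k → U k = (Nat.factorial (k - 1) : ℝ)⁻¹ *
      ∏ i, Real.Gamma (b i) * Real.Gamma (a i + k * A i)
        / (Real.Gamma (a i) * Real.Gamma (b i + k * A i))) :
    (∀ k, U (k + 1) ≤ U k) ∧ (∀ k, U k ≤ 2) ∧ (∀ k, U k ≤ 1) := by
  have hxnn : ∀ (k : ℕ) (i : Fin p), (0:ℝ) ≤ (k : ℝ) * A i :=
    fun k i => mul_nonneg (Nat.cast_nonneg k) (hA i).le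
  have hprod_nonneg : ∀ k : ℕ, (0:ℝ) ≤ ∏ i, Real.Gamma (b i) * Real.Gamma (a i + k * A i)
        / (Real.Gamma (a i) * Real.Gamma (b i + k * A i)) := fun k =>
    Finset.prod_nonneg fun i _ => factor_nonneg (ha i) (hab i) (hxnn k i)
  have hprod_le_one : ∀ k : ℕ, (∏ i, Real.Gamma (b i) * Real.Gamma (a i + k * A i)
        / (Real.Gamma (a i) * Real.Gamma (b i + k * A i))) ≤ 1 := fun k =>
    Finset.prod_le_one (fun i _ => factor_nonneg (ha i) (hab i) (hxnn k i))
      (fun i _ => factor_le_one (ha i) (hab i) (hxnn k i))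
  have hfac_inv : ∀ m : ℕ, ((Nat.factorial m : ℝ))⁻¹ ≤ 1 := by
    intro m
    rw [inv_le_one_iff₀]
    right
    exact_mod_cast Nat.one_le_iff_ne_zero.mpr (Nat.factorial_ne_zero m)
  have h1 : ∀ k, U k ≤ 1 := by
    intro k
    rcases Nat.eq_zero_or_pos k with rfl | hk
    · rw [hU0]
    · rw [hUk k hk]
      calc ((Nat.factorial (k-1) : ℝ))⁻¹ * _ ≤ 1 * 1 :=
            mul_le_mul (hfac_inv _) (hprod_le_one k) (hprod_nonneg k)
              (by norm_num)
        _ = 1 := by norm_num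
  refine ⟨?_, fun k => (h1 k).trans one_le_two, h1⟩
  intro k
  rcases Nat.eq_zero_or_pos k with rfl | hk
  · rw [hU0]; exact h1 1
  · obtain ⟨m, rfl⟩ := Nat.exists_eq_add_of_le hk
    rw [hUk (1 + m) (by omega), hUk (1 + m + 1) (by omega)]
    have hsimp1 : 1 + m - 1 = m := by omega
    have hsimp2 : 1 + m + 1 - 1 = m + 1 := by omega
    rw [hsimp1, hsimp2]
    have hfacmono : ((Nat.factorial (m+1) : ℝ))⁻¹ ≤ ((Nat.factorial m : ℝ))⁻¹ := by
      apply inv_anti₀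
      · exact_mod_cast Nat.factorial_pos m
      · exact_mod_cast Nat.factorial_le (Nat.le_succ m)
    have hx1 : ∀ i : Fin p, (0:ℝ) ≤ (1 + (m:ℝ)) * A i := fun i =>
      mul_nonneg (by positivity) (hA i).le
    have hx2 : ∀ i : Fin p, (0:ℝ) ≤ (1 + (m:ℝ) + 1) * A i := fun i =>
      mul_nonneg (by positivity) (hA i).le
    have hprodmono : (∏ i, Real.Gamma (b i) * Real.Gamma (a i + (1 + (m:ℝ) + 1) * A i)
        / (Real.Gamma (a i) * Real.Gamma (b i + (1 + (m:ℝ) + 1) * A i))) ≤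
        ∏ i, Real.Gamma (b i) * Real.Gamma (a i + (1 + (m:ℝ)) * A i)
        / (Real.Gamma (a i) * Real.Gamma (b i + (1 + (m:ℝ)) * A i)) := by
      apply Finset.prod_le_prod
      · intro i _
        exact factor_nonneg (ha i) (hab i) (hx2 i)
      · intro i _
        exact factor_mono (ha i) (hab i) (hx1 i)
          (mul_le_mul_of_nonneg_right (by linarith) (hA i).le)
    have hprodnn : (0:ℝ) ≤ ∏ i, Real.Gamma (b i) * Real.Gamma (a i + (1 + (m:ℝ) + 1) * A i)
        / (Real.Gamma (a i) * Real.Gamma (b i + (1 + (m:ℝ) + 1) * A i)) :=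
      Finset.prod_nonneg fun i _ => factor_nonneg (ha i) (hab i) (hx2 i)
    push_cast
    exact mul_le_mul hfacmono hprodmono hprodnn
      (inv_nonneg.mpr (Nat.cast_nonneg _))
end

section
/- Let f(z) = z + Σ_{k≥2} A_k z^k be analytic on the unit disc with real coefficients satisfying 1 ≥ 2A_2 ≥ 3A_3 ≥ … ≥ nA_n ≥ (n+1)A_{n+1} ≥ … ≥ 0. Then Re(f'(z)·(1−z)) > 0 for all z in the unit disc, i.e., f is close-to-convex with respect to −log(1−z). -/
set_option maxHeartbeats 1000000

theorem ozaki_close_to_convex (A : ℕ → ℝ) (hA1 : A 1 = 1)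
    (hdec : ∀ n : ℕ, 1 ≤ n → (n + 1 : ℝ) * A (n + 1) ≤ (n : ℝ) * A n)
    (hnonneg : ∀ n : ℕ, 1 ≤ n → 0 ≤ (n : ℝ) * A n)
    (f : ℂ → ℂ) (hf : ∀ z : ℂ, ‖z‖ < 1 → f z = ∑' k : ℕ, (A (k + 1) : ℂ) * z ^ (k + 1)) :
    ∀ z : ℂ, ‖z‖ < 1 → 0 < (deriv f z * (1 - z)).re := by
  -- the sequence b n = (n+1) A (n+1)
  set b : ℕ → ℝ := fun n => ((n : ℝ) + 1) * A (n + 1) with hb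
  have hb0 : b 0 = 1 := by simp [hb, hA1]
  have hbnonneg : ∀ n, 0 ≤ b n := by
    intro n
    have := hnonneg (n + 1) (by omega)
    push_cast at this
    simpa [hb] using this
  have hbdec : ∀ n, b (n + 1) ≤ b n := by
    intro n
    have := hdec (n + 1) (by omega)
    push_cast at this
    simpa [hb] using this
  have hble : ∀ n, b n ≤ 1 := by
    intro n
    induction n with
    | zero => simp [hb0]
    | succ k ih => exact (hbdec k).trans ih
  -- the difference sequence
  set d : ℕ → ℝ := fun n => b n - b (n + 1) with hd
  have hdnonneg : ∀ n, 0 ≤ d n := fun n => sub_nonneg.2 (hbdec n)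
  have hdsumle : ∀ N, ∑ n ∈ Finset.range N, d n ≤ 1 := by
    intro N
    have : ∑ n ∈ Finset.range N, d n = b 0 - b N := by
      induction N with
      | zero => simp
      | succ k ih => rw [Finset.sum_range_succ, ih]; simp only [hd]; ring
    rw [this, hb0]
    linarith [hbnonneg N]
  have hdsummable : Summable d :=
    summable_of_sum_range_le hdnonneg hdsumle
  have hdtsum : ∑' n, d n ≤ 1 := Summable.tsum_le_of_sum_range_le hdsummable hdsumle
  intro z hz
  -- Step 1: deriv f z = ∑' n, (b n : ℂ) * z ^ n
  set r : ℝ := (‖z‖ + 1) / 2 with hr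
  have hzr : ‖z‖ < r := by rw [hr]; linarith
  have hr1 : r < 1 := by rw [hr]; linarith
  have hr0 : 0 < r := lt_of_le_of_lt (norm_nonneg z) hzr
  have hderiv : HasDerivAt (fun w : ℂ => ∑' k : ℕ, (A (k + 1) : ℂ) * w ^ (k + 1))
      (∑' n : ℕ, (b n : ℂ) * z ^ n) z := by
    apply hasDerivAt_tsum_of_isPreconnected
      (u := fun n => r ^ n)
      (g' := fun n w => (b n : ℂ) * w ^ n)
      (summable_geometric_of_lt_one hr0.le hr1)
      (Metric.isOpen_ball (x := (0:ℂ)) (ε := r))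
      ((convex_ball (0:ℂ) r).isPreconnected)
    · intro n w _
      have h1 : HasDerivAt (fun w : ℂ => w ^ (n + 1)) (((n:ℂ) + 1) * w ^ n) w := by
        simpa using hasDerivAt_pow (n + 1) w
      have := h1.const_mul ((A (n + 1) : ℂ))
      convert this using 1
      case e'_4 => rfl
      simp [hb]
      push_cast
      ring
    · intro n w hw
      have hwn : ‖w‖ < r := by simpa using hw
      have : ‖(b n : ℂ) * w ^ n‖ = b n * ‖w‖ ^ n := by
        rw [norm_mul, norm_pow, Complex.norm_real, Real.norm_of_nonneg (hbnonneg n)]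
      rw [this]
      calc b n * ‖w‖ ^ n ≤ 1 * r ^ n := by
            apply mul_le_mul (hble n) (pow_le_pow_left₀ (norm_nonneg w) hwn.le n)
              (pow_nonneg (norm_nonneg w) n) zero_le_one
        _ = r ^ n := one_mul _
    · exact Metric.mem_ball_self hr0
    · exact summable_zero.congr (by simp)
    · simpa using hzr
  have hfeq : f =ᶠ[nhds z] fun w : ℂ => ∑' k : ℕ, (A (k + 1) : ℂ) * w ^ (k + 1) := by
    filter_upwards [Metric.ball_mem_nhds z (show (0:ℝ) < 1 - ‖z‖ by linarith)] with w hw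
    apply hf
    have : ‖w - z‖ < 1 - ‖z‖ := by simpa [dist_eq_norm] using hw
    calc ‖w‖ = ‖w - z + z‖ := by ring_nf
      _ ≤ ‖w - z‖ + ‖z‖ := norm_add_le _ _
      _ < 1 := by linarith
  have hderivf : deriv f z = ∑' n : ℕ, (b n : ℂ) * z ^ n :=
    ((hderiv.congr_of_eventuallyEq hfeq)).deriv
  -- Step 2: summability of the complex series
  have hS : Summable (fun n : ℕ => (b n : ℂ) * z ^ n) := by
    apply Summable.of_norm
    apply Summable.of_nonneg_of_le (fun n => norm_nonneg _)
      (fun n => ?_) (summable_geometric_of_lt_one (norm_nonneg z) hz)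
    rw [norm_mul, norm_pow, Complex.norm_real, Real.norm_of_nonneg (hbnonneg n)]
    calc b n * ‖z‖ ^ n ≤ 1 * ‖z‖ ^ n :=
          mul_le_mul_of_nonneg_right (hble n) (pow_nonneg (norm_nonneg z) n)
      _ = ‖z‖ ^ n := one_mul _
  have hS1 : Summable (fun n : ℕ => (b (n + 1) : ℂ) * z ^ (n + 1)) :=
    (summable_nat_add_iff 1).2 hS
  have hS2 : Summable (fun n : ℕ => (b n : ℂ) * z ^ (n + 1)) := by
    have := hS.mul_left z
    apply this.congr
    intro n; ring
  -- Step 3: algebraic rewriting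
  have key : deriv f z * (1 - z)
      = 1 - ∑' n : ℕ, (d n : ℂ) * z ^ (n + 1) := by
    rw [hderivf]
    have hsplit : ∑' n : ℕ, (b n : ℂ) * z ^ n
        = 1 + ∑' n : ℕ, (b (n + 1) : ℂ) * z ^ (n + 1) := by
      rw [Summable.tsum_eq_zero_add hS]
      simp [hb0]
    have hmul : z * ∑' n : ℕ, (b n : ℂ) * z ^ n
        = ∑' n : ℕ, (b n : ℂ) * z ^ (n + 1) := by
      rw [← tsum_mul_left]
      congr 1; funext n; ring
    have : (∑' n : ℕ, (b n : ℂ) * z ^ n) * (1 - z)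
        = 1 + ∑' n : ℕ, (b (n + 1) : ℂ) * z ^ (n + 1)
          - ∑' n : ℕ, (b n : ℂ) * z ^ (n + 1) := by
      rw [mul_sub, mul_one, mul_comm _ z, hmul, hsplit]
    rw [this]
    have : ∑' n : ℕ, (d n : ℂ) * z ^ (n + 1)
        = (∑' n : ℕ, (b n : ℂ) * z ^ (n + 1)) - ∑' n : ℕ, (b (n + 1) : ℂ) * z ^ (n + 1) := by
      rw [← Summable.tsum_sub hS2 hS1]
      congr 1; funext n
      simp [hd]
      push_cast
      ring
    rw [this]
    ring
  -- Step 4: the estimate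
  rw [key]
  have hTnorm : ‖∑' n : ℕ, (d n : ℂ) * z ^ (n + 1)‖ ≤ ‖z‖ := by
    have hsum : Summable (fun n : ℕ => d n * ‖z‖ ^ (n + 1)) := by
      apply Summable.of_nonneg_of_le
        (fun n => mul_nonneg (hdnonneg n) (pow_nonneg (norm_nonneg z) _))
        (fun n => ?_) hdsummable
      calc d n * ‖z‖ ^ (n + 1) ≤ d n * 1 :=
            mul_le_mul_of_nonneg_left (pow_le_one₀ (norm_nonneg z) hz.le) (hdnonneg n)
        _ = d n := mul_one _
    calc ‖∑' n : ℕ, (d n : ℂ) * z ^ (n + 1)‖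
        ≤ ∑' n : ℕ, ‖(d n : ℂ) * z ^ (n + 1)‖ := norm_tsum_le_tsum_norm (by
          apply hsum.congr
          intro n
          rw [norm_mul, norm_pow, Complex.norm_real, Real.norm_of_nonneg (hdnonneg n)])
      _ = ∑' n : ℕ, d n * ‖z‖ ^ (n + 1) := by
          congr 1; funext n
          rw [norm_mul, norm_pow, Complex.norm_real, Real.norm_of_nonneg (hdnonneg n)]
      _ ≤ ∑' n : ℕ, d n * ‖z‖ := by
          apply Summable.tsum_le_tsum (fun n => ?_) hsum (hdsummable.mul_right _)
          calc d n * ‖z‖ ^ (n + 1) ≤ d n * (‖z‖ * 1 ^ n) := by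
                apply mul_le_mul_of_nonneg_left _ (hdnonneg n)
                rw [pow_succ']
                exact mul_le_mul_of_nonneg_left
                  (pow_le_pow_left₀ (norm_nonneg z) hz.le n) (norm_nonneg z)
            _ = d n * ‖z‖ := by rw [one_pow, mul_one]
      _ = (∑' n : ℕ, d n) * ‖z‖ := tsum_mul_right
      _ ≤ 1 * ‖z‖ := mul_le_mul_of_nonneg_right hdtsum (norm_nonneg z)
      _ = ‖z‖ := one_mul _
  have hre : |(∑' n : ℕ, (d n : ℂ) * z ^ (n + 1)).re| ≤ ‖z‖ :=
    (Complex.abs_re_le_norm _).trans hTnorm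
  have : (1 - ∑' n : ℕ, (d n : ℂ) * z ^ (n + 1)).re
      = 1 - (∑' n : ℕ, (d n : ℂ) * z ^ (n + 1)).re := by simp
  rw [this]
  have := abs_le.1 hre
  linarith
end

section
/- Let p ≥ 1, bᵢ > aᵢ > 0 and Aᵢ > 0 for i = 1,…,p. For z in the unit disc, Re( Σ_{k=0}^∞ ∏_{i=1}^p [Γ(bᵢ)Γ(aᵢ + kAᵢ)] / [Γ(aᵢ)Γ(bᵢ + kAᵢ)] · z^k ) > 1/2. -/
open MeasureTheory Set

section FoxWrightAux

lemma fw_cpow_eq_ofReal {t : ℝ} (ht : 0 ≤ t) (x : ℝ) :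
    (t : ℂ) ^ ((x : ℂ) - 1) = ((t ^ (x - 1) : ℝ) : ℂ) := by
  rw [show ((x : ℂ) - 1) = ((x - 1 : ℝ) : ℂ) by push_cast; ring, ← Complex.ofReal_cpow ht]

lemma fw_realBeta_integrableOn {x y : ℝ} (hx : 0 < x) (hy : 0 < y) :
    IntegrableOn (fun t : ℝ => t ^ (x - 1) * (1 - t) ^ (y - 1)) (Ioo 0 1) := by
  have hc : IntervalIntegrable
      (fun t : ℝ => (t : ℂ) ^ ((x : ℂ) - 1) * (1 - (t : ℂ)) ^ ((y : ℂ) - 1)) volume 0 1 :=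
    Complex.betaIntegral_convergent (by simpa using hx) (by simpa using hy)
  have h2 : IntegrableOn
      (fun t : ℝ => (t : ℂ) ^ ((x : ℂ) - 1) * (1 - (t : ℂ)) ^ ((y : ℂ) - 1)) (Ioo 0 1) :=
    ((intervalIntegrable_iff_integrableOn_Ioc_of_le (by norm_num)).mp hc).mono_set
      Ioo_subset_Ioc_self
  refine h2.re.congr ?_
  filter_upwards [ae_restrict_mem measurableSet_Ioo] with t ht
  have h4 : (t : ℂ) ^ ((x : ℂ) - 1) * (1 - (t : ℂ)) ^ ((y : ℂ) - 1)
      = ((t ^ (x - 1) * (1 - t) ^ (y - 1) : ℝ) : ℂ) := by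
    rw [fw_cpow_eq_ofReal ht.1.le, show (1 - (t:ℂ)) = ((1 - t : ℝ) : ℂ) by push_cast; ring,
      fw_cpow_eq_ofReal (by linarith [ht.2]) y]
    push_cast; ring
  simp [h4]

lemma fw_realBeta_eq {x y : ℝ} (hx : 0 < x) (hy : 0 < y) :
    ∫ t in Ioo (0:ℝ) 1, t ^ (x - 1) * (1 - t) ^ (y - 1)
      = Real.Gamma x * Real.Gamma y / Real.Gamma (x + y) := by
  have key := Complex.Gamma_mul_Gamma_eq_betaIntegral (s := (x:ℂ)) (t := (y:ℂ))
    (by simpa using hx) (by simpa using hy)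
  have hbeta : Complex.betaIntegral (x:ℂ) (y:ℂ)
      = ((∫ t in Ioo (0:ℝ) 1, t ^ (x - 1) * (1 - t) ^ (y - 1) : ℝ) : ℂ) := by
    rw [Complex.betaIntegral]
    rw [intervalIntegral.integral_of_le (by norm_num), ← integral_Ioc_eq_integral_Ioo] at *
    have : (∫ t in Ioc (0:ℝ) 1, (t : ℂ) ^ ((x : ℂ) - 1) * (1 - (t : ℂ)) ^ ((y : ℂ) - 1))
        = ∫ t in Ioc (0:ℝ) 1, ((t ^ (x - 1) * (1 - t) ^ (y - 1) : ℝ) : ℂ) := by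
      refine setIntegral_congr_fun measurableSet_Ioc (fun t ht => ?_)
      rw [fw_cpow_eq_ofReal ht.1.le, show (1 - (t:ℂ)) = ((1 - t : ℝ) : ℂ) by push_cast; ring,
        fw_cpow_eq_ofReal (by linarith [ht.2]) y]
      push_cast; ring
    rw [this]; exact integral_ofReal
  rw [hbeta, Complex.Gamma_ofReal, Complex.Gamma_ofReal,
    show ((x:ℂ) + y) = ((x+y : ℝ):ℂ) by push_cast; ring, Complex.Gamma_ofReal] at key
  have h0 : (↑(Real.Gamma x * Real.Gamma y) : ℂ)
      = ↑(Real.Gamma (x+y) * ∫ t in Ioo (0:ℝ) 1, t ^ (x - 1) * (1 - t) ^ (y - 1)) := by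
    push_cast; linear_combination key
  have h2 := Complex.ofReal_injective h0
  have hG : Real.Gamma (x+y) ≠ 0 := (Real.Gamma_pos_of_pos (by linarith)).ne'
  field_simp
  linarith [h2]

noncomputable def fwBetaD (a b : ℝ) (t : ℝ) : ℝ :=
  (Real.Gamma b / (Real.Gamma a * Real.Gamma (b - a))) * (t ^ (a - 1) * (1 - t) ^ (b - a - 1))

lemma fwBetaD_measurable (a b : ℝ) : Measurable (fwBetaD a b) := by
  unfold fwBetaD; fun_prop

lemma fwBetaD_pos {a b : ℝ} (ha : 0 < a) (hab : a < b) {t : ℝ} (ht : t ∈ Ioo (0:ℝ) 1) :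
    0 < fwBetaD a b t := by
  have h1 := Real.Gamma_pos_of_pos ha
  have h2 := Real.Gamma_pos_of_pos (show (0:ℝ) < b - a by linarith)
  have h3 := Real.Gamma_pos_of_pos (show (0:ℝ) < b by linarith)
  have h4 : (0:ℝ) < 1 - t := by linarith [ht.2]
  exact mul_pos (div_pos h3 (mul_pos h1 h2))
    (mul_pos (Real.rpow_pos_of_pos ht.1 _) (Real.rpow_pos_of_pos h4 _))

lemma fwBetaD_eqOn {a b : ℝ} {u : ℝ} :
    EqOn (fun t : ℝ => fwBetaD a b t * t ^ u)
      (fun t => (Real.Gamma b / (Real.Gamma a * Real.Gamma (b - a)))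
        * (t ^ (a + u - 1) * (1 - t) ^ (b - a - 1))) (Ioo 0 1) := by
  intro t ht
  simp only [fwBetaD]
  rw [show a + u - 1 = (a - 1) + u by ring, Real.rpow_add ht.1]
  ring

lemma fw_moment_integrableOn {a b : ℝ} (ha : 0 < a) (hab : a < b) {u : ℝ} (hu : 0 ≤ u) :
    IntegrableOn (fun t : ℝ => fwBetaD a b t * t ^ u) (Ioo 0 1) := by
  have h := (fw_realBeta_integrableOn (x := a + u) (by linarith) (y := b - a)
    (by linarith)).const_mul (Real.Gamma b / (Real.Gamma a * Real.Gamma (b - a)))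
  refine h.congr ?_
  filter_upwards [ae_restrict_mem measurableSet_Ioo] with t ht
  exact (fwBetaD_eqOn ht).symm

lemma fw_moment_eq {a b : ℝ} (ha : 0 < a) (hab : a < b) {u : ℝ} (hu : 0 ≤ u) :
    ∫ t in Ioo (0:ℝ) 1, fwBetaD a b t * t ^ u
      = Real.Gamma b * Real.Gamma (a + u) / (Real.Gamma a * Real.Gamma (b + u)) := by
  rw [setIntegral_congr_fun measurableSet_Ioo fwBetaD_eqOn, integral_const_mul _ _,
    fw_realBeta_eq (by linarith) (by linarith), show a + u + (b - a) = b + u by ring]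
  have h1 := Real.Gamma_pos_of_pos ha
  have h2 := Real.Gamma_pos_of_pos (show (0:ℝ) < b - a by linarith)
  have h3 := Real.Gamma_pos_of_pos (show (0:ℝ) < b + u by linarith)
  field_simp

lemma fw_re_inv_one_sub {w : ℂ} (hw : ‖w‖ < 1) : 1 / 2 < ((1 - w)⁻¹).re := by
  have hn : Complex.normSq w < 1 := by
    have h2 : ‖w‖ ^ 2 < 1 := by nlinarith [norm_nonneg w]
    rwa [Complex.sq_norm] at h2
  have h1 : (1 : ℂ) - w ≠ 0 := by
    intro h
    rw [sub_eq_zero] at h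
    simp [← h] at hw
  have hN : 0 < Complex.normSq (1 - w) := Complex.normSq_pos.mpr h1
  rw [Complex.inv_re, lt_div_iff₀ hN]
  simp only [Complex.sub_re, Complex.sub_im, Complex.one_re, Complex.one_im,
    Complex.normSq_apply] at *
  nlinarith [hn]

lemma fw_pi_integral_Ioo {p : ℕ} (f : Fin p → ℝ → ℝ) :
    ∫ t : Fin p → ℝ, ∏ i, f i (t i)
        ∂(Measure.pi fun _ : Fin p => volume.restrict (Ioo 0 1)) =
      ∏ i, ∫ x in Ioo (0:ℝ) 1, f i x := by
  haveI h : SigmaFinite ((volume : Measure ℝ).restrict (Ioo 0 1)) := inferInstance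
  letI m : MeasureSpace ℝ := ⟨volume.restrict (Ioo 0 1)⟩
  haveI : SigmaFinite (m.volume) := h
  exact MeasureTheory.integral_fin_nat_prod_eq_prod (E := fun _ : Fin p => ℝ) f

lemma fw_pi_integrable_Ioo {p : ℕ} (f : Fin p → ℝ → ℝ)
    (hf : ∀ i, IntegrableOn (f i) (Ioo 0 1)) :
    Integrable (fun t : Fin p → ℝ => ∏ i, f i (t i))
      (Measure.pi fun _ : Fin p => volume.restrict (Ioo 0 1)) := by
  haveI h : SigmaFinite ((volume : Measure ℝ).restrict (Ioo 0 1)) := inferInstance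
  letI m : MeasureSpace ℝ := ⟨volume.restrict (Ioo 0 1)⟩
  haveI : SigmaFinite (m.volume) := h
  exact MeasureTheory.Integrable.fintype_prod (f := f) hf

end FoxWrightAux

theorem fox_wright_re_half (p : ℕ) (hp : 1 ≤ p) (a b A : Fin p → ℝ)
    (ha : ∀ i, 0 < a i) (hab : ∀ i, a i < b i) (hA : ∀ i, 0 < A i) :
    ∀ z : ℂ, ‖z‖ < 1 →
      1 / 2 < (∑' k : ℕ, ((∏ i, Real.Gamma (b i) * Real.Gamma (a i + k * A i)
        / (Real.Gamma (a i) * Real.Gamma (b i + k * A i)) : ℝ) : ℂ) * z ^ k).re := by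
  intro z hz
  set ν : Measure (Fin p → ℝ) := Measure.pi fun _ : Fin p => volume.restrict (Ioo 0 1) with hν
  set g : Fin p → ℝ → ℝ := fun i => fwBetaD (a i) (b i) with hg
  set G : (Fin p → ℝ) → ℝ := fun t => ∏ i, g i (t i) with hG
  set S : (Fin p → ℝ) → ℝ := fun t => ∏ i, (t i) ^ (A i) with hS
  -- a.e. membership in the open box
  have hbox : ∀ᵐ t ∂ν, ∀ i, t i ∈ Ioo (0:ℝ) 1 := by
    rw [ae_all_iff]
    intro i
    rw [ae_iff]
    have : ((volume : Measure ℝ).restrict (Ioo 0 1)) ((Ioo (0:ℝ) 1)ᶜ) = 0 := by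
      rw [Measure.restrict_apply measurableSet_Ioo.compl]
      simp
    show ν (Function.eval i ⁻¹' (Ioo (0:ℝ) 1)ᶜ) = 0
    rw [hν]
    exact Measure.pi_eval_preimage_null
      (μ := fun _ : Fin p => (volume : Measure ℝ).restrict (Ioo 0 1)) this
  -- measurability
  have hGmeas : Measurable G := by
    apply Finset.measurable_prod
    intro i _
    exact (fwBetaD_measurable _ _).comp (measurable_pi_apply i)
  have hSmeas : Measurable S := by
    apply Finset.measurable_prod
    intro i _
    have : Measurable fun x : ℝ => x ^ (A i) := by fun_prop
    exact this.comp (measurable_pi_apply i)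
  -- pointwise facts on the box
  have hGpos : ∀ t : Fin p → ℝ, (∀ i, t i ∈ Ioo (0:ℝ) 1) → 0 < G t := by
    intro t ht
    exact Finset.prod_pos fun i _ => fwBetaD_pos (ha i) (hab i) (ht i)
  have hS0 : ∀ t : Fin p → ℝ, (∀ i, t i ∈ Ioo (0:ℝ) 1) → 0 ≤ S t := by
    intro t ht
    exact Finset.prod_nonneg fun i _ => (Real.rpow_pos_of_pos (ht i).1 _).le
  have hS1 : ∀ t : Fin p → ℝ, (∀ i, t i ∈ Ioo (0:ℝ) 1) → S t ≤ 1 := by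
    intro t ht
    refine Finset.prod_le_one (fun i _ => (Real.rpow_pos_of_pos (ht i).1 _).le) fun i _ => ?_
    exact Real.rpow_le_one (ht i).1.le (ht i).2.le (hA i).le
  have hwnorm : ∀ t : Fin p → ℝ, (∀ i, t i ∈ Ioo (0:ℝ) 1) → ‖(S t : ℂ) * z‖ ≤ ‖z‖ := by
    intro t ht
    rw [norm_mul, Complex.norm_real, Real.norm_eq_abs, abs_of_nonneg (hS0 t ht)]
    exact mul_le_of_le_one_left (norm_nonneg z) (hS1 t ht)
  -- key real moment identity
  have hck : ∀ k : ℕ, (∏ i, Real.Gamma (b i) * Real.Gamma (a i + k * A i)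
      / (Real.Gamma (a i) * Real.Gamma (b i + k * A i))) = ∫ t, G t * S t ^ k ∂ν := by
    intro k
    have h1 : ∀ i : Fin p, ∫ x in Ioo (0:ℝ) 1, g i x * (x ^ (A i)) ^ k
        = Real.Gamma (b i) * Real.Gamma (a i + k * A i)
          / (Real.Gamma (a i) * Real.Gamma (b i + k * A i)) := by
      intro i
      have heq : EqOn (fun x : ℝ => g i x * (x ^ (A i)) ^ k)
          (fun x => fwBetaD (a i) (b i) x * x ^ ((k : ℝ) * A i)) (Ioo 0 1) := by
        intro x hx
        have : (x ^ (A i)) ^ k = x ^ ((k:ℝ) * A i) := by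
          rw [← Real.rpow_natCast (x ^ (A i)) k, ← Real.rpow_mul hx.1.le, mul_comm]
        simp only [hg, this]
      rw [setIntegral_congr_fun measurableSet_Ioo heq,
        fw_moment_eq (ha i) (hab i) (mul_nonneg (Nat.cast_nonneg k) (hA i).le)]
    calc (∏ i, Real.Gamma (b i) * Real.Gamma (a i + k * A i)
        / (Real.Gamma (a i) * Real.Gamma (b i + k * A i)))
        = ∏ i, ∫ x in Ioo (0:ℝ) 1, g i x * (x ^ (A i)) ^ k := by
          exact (Finset.prod_congr rfl fun i _ => (h1 i)).symm
      _ = ∫ t, ∏ i, (g i (t i) * ((t i) ^ (A i)) ^ k) ∂ν :=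
          (fw_pi_integral_Ioo fun i x => g i x * (x ^ (A i)) ^ k).symm
      _ = ∫ t, G t * S t ^ k ∂ν := by
          refine integral_congr_ae (Filter.Eventually.of_forall fun t => ?_)
          show (∏ i, g i (t i) * (t i ^ A i) ^ k)
            = (∏ i, g i (t i)) * (∏ i, (t i) ^ A i) ^ k
          rw [← Finset.prod_pow, Finset.prod_mul_distrib]
  -- integrability of G
  have hGint : Integrable G ν := by
    refine fw_pi_integrable_Ioo g fun i => ?_
    have h := fw_moment_integrableOn (ha i) (hab i) (le_refl (0:ℝ))
    refine h.congr ?_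
    filter_upwards with t
    simp [hg]
  -- complex integrand
  set F : ℕ → (Fin p → ℝ) → ℂ := fun k t => (G t : ℂ) * ((S t : ℂ) * z) ^ k with hF
  set f : (Fin p → ℝ) → ℂ := fun t => (G t : ℂ) * (1 - (S t : ℂ) * z)⁻¹ with hf
  have hcast : ∀ (h : (Fin p → ℝ) → ℝ),
      ((∫ t, h t ∂ν : ℝ) : ℂ) = ∫ t, ((h t : ℝ) : ℂ) ∂ν := fun h =>
    (integral_ofReal (𝕜 := ℂ)).symm
  have hE1 : ∀ k : ℕ, ((∏ i, Real.Gamma (b i) * Real.Gamma (a i + k * A i)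
      / (Real.Gamma (a i) * Real.Gamma (b i + k * A i)) : ℝ) : ℂ) * z ^ k
        = ∫ t, F k t ∂ν := by
    intro k
    rw [hck k, hcast, ← integral_mul_const]
    refine integral_congr_ae (Filter.Eventually.of_forall fun t => ?_)
    simp only [hF]
    push_cast
    ring
  have hFmeas : ∀ k : ℕ, AEStronglyMeasurable (F k) ν := by
    intro k
    exact ((Complex.measurable_ofReal.comp hGmeas).mul
      (((Complex.measurable_ofReal.comp hSmeas).mul_const z).pow_const k)).aestronglyMeasurable
  have hsum : HasSum (fun k => ∫ t, F k t ∂ν) (∫ t, f t ∂ν) := by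
    refine hasSum_integral_of_dominated_convergence (bound := fun k t => G t * ‖z‖ ^ k)
      hFmeas ?_ ?_ ?_ ?_
    · intro k
      filter_upwards [hbox] with t ht
      have h1 : ‖F k t‖ = G t * ‖(S t : ℂ) * z‖ ^ k := by
        rw [hF]
        simp only [norm_mul, norm_pow, Complex.norm_real, Real.norm_eq_abs,
          abs_of_pos (hGpos t ht)]
      rw [h1]
      exact mul_le_mul_of_nonneg_left (pow_le_pow_left₀ (norm_nonneg _) (hwnorm t ht) k)
        (hGpos t ht).le
    · filter_upwards with t
      exact (summable_geometric_of_lt_one (norm_nonneg z) hz).mul_left _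
    · have heq : (fun t => ∑' k : ℕ, G t * ‖z‖ ^ k) = fun t => G t * (1 - ‖z‖)⁻¹ := by
        funext t
        rw [tsum_mul_left, tsum_geometric_of_lt_one (norm_nonneg z) hz]
      rw [heq]
      exact hGint.mul_const _
    · filter_upwards [hbox] with t ht
      exact (hasSum_geometric_of_norm_lt_one
        (lt_of_le_of_lt (hwnorm t ht) hz)).mul_left _
  have hfmeas : AEStronglyMeasurable f ν := by
    refine ((Complex.measurable_ofReal.comp hGmeas).mul ?_).aestronglyMeasurable
    exact (measurable_const.sub ((Complex.measurable_ofReal.comp hSmeas).mul_const z)).inv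
  have hfint : Integrable f ν := by
    refine Integrable.mono' (hGint.mul_const ((1 - ‖z‖)⁻¹)) hfmeas ?_
    filter_upwards [hbox] with t ht
    have h1 : (1:ℝ) - ‖z‖ ≤ ‖1 - (S t : ℂ) * z‖ := by
      calc (1:ℝ) - ‖z‖ ≤ 1 - ‖(S t : ℂ) * z‖ := by linarith [hwnorm t ht]
        _ ≤ ‖1 - (S t : ℂ) * z‖ := by
            simpa using norm_sub_norm_le (1 : ℂ) ((S t : ℂ) * z)
    have hzlt : (0:ℝ) < 1 - ‖z‖ := by linarith
    have h2 : ‖(1 - (S t : ℂ) * z)⁻¹‖ ≤ (1 - ‖z‖)⁻¹ := by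
      rw [norm_inv]
      exact inv_anti₀ hzlt h1
    calc ‖f t‖ = |G t| * ‖(1 - (S t : ℂ) * z)⁻¹‖ := by
          rw [hf]; simp [norm_mul, Complex.norm_real, Real.norm_eq_abs]
      _ ≤ G t * (1 - ‖z‖)⁻¹ := by
          rw [abs_of_pos (hGpos t ht)]
          exact mul_le_mul_of_nonneg_left h2 (hGpos t ht).le
  -- the goal's tsum equals the integral of f
  have hsum_eq : (∑' k : ℕ, ((∏ i, Real.Gamma (b i) * Real.Gamma (a i + k * A i)
      / (Real.Gamma (a i) * Real.Gamma (b i + k * A i)) : ℝ) : ℂ) * z ^ k)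
        = ∫ t, f t ∂ν := by
    rw [show (fun k : ℕ => ((∏ i, Real.Gamma (b i) * Real.Gamma (a i + k * A i)
      / (Real.Gamma (a i) * Real.Gamma (b i + k * A i)) : ℝ) : ℂ) * z ^ k)
        = fun k => ∫ t, F k t ∂ν from funext hE1]
    exact hsum.tsum_eq
  -- total mass one
  have hG1 : ∫ t, G t ∂ν = 1 := by
    have h0 := hck 0
    have h1 : (∏ i, Real.Gamma (b i) * Real.Gamma (a i + (0:ℕ) * A i)
        / (Real.Gamma (a i) * Real.Gamma (b i + (0:ℕ) * A i))) = 1 := by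
      refine Finset.prod_eq_one fun i _ => ?_
      have g1 := (Real.Gamma_pos_of_pos (ha i)).ne'
      have g2 := (Real.Gamma_pos_of_pos (lt_trans (ha i) (hab i))).ne'
      rw [Nat.cast_zero, zero_mul, add_zero, add_zero]
      field_simp
    rw [h1] at h0
    have h2 : ∫ t, G t * S t ^ 0 ∂ν = ∫ t, G t ∂ν := by
      refine integral_congr_ae (Filter.Eventually.of_forall fun t => ?_)
      simp
    rw [h2] at h0
    exact h0.symm
  -- pointwise strict bound
  set h : (Fin p → ℝ) → ℝ := fun t => (f t).re - G t / 2 with hh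
  have hpos : ∀ᵐ t ∂ν, 0 < h t := by
    filter_upwards [hbox] with t ht
    have hw : ‖(S t : ℂ) * z‖ < 1 := lt_of_le_of_lt (hwnorm t ht) hz
    have hre := fw_re_inv_one_sub hw
    have h1 : (f t).re = G t * ((1 - (S t : ℂ) * z)⁻¹).re := by
      rw [hf]
      simp [Complex.mul_re]
    rw [hh]
    simp only [h1]
    nlinarith [hGpos t ht]
  have hhint : Integrable h ν := by
    have h1 : Integrable (fun t => (f t).re) ν := by
      have := hfint.re
      refine this.congr ?_
      filter_upwards with t
      simp
    exact h1.sub (hGint.div_const 2)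
  have hnu1 : ν univ = 1 := by
    rw [hν, Measure.pi_univ]
    simp [Real.volume_Ioo]
  have hsupp : 0 < ν (Function.support h) := by
    have hcompl : ν {t | ¬ (0 : ℝ) < h t} = 0 := ae_iff.mp hpos
    have hc0 : ν (Function.support h)ᶜ = 0 := by
      refine measure_mono_null (fun t ht => ?_) hcompl
      simp only [Function.mem_support, not_not, mem_compl_iff] at ht
      show ¬ (0:ℝ) < h t
      rw [ht]
      simp
    have h2 := measure_union_le (μ := ν) (Function.support h) (Function.support h)ᶜ
    rw [union_compl_self, hnu1, hc0, add_zero] at h2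
    exact lt_of_lt_of_le (by norm_num) h2
  have hintpos : 0 < ∫ t, h t ∂ν :=
    (integral_pos_iff_support_of_nonneg_ae (hpos.mono fun t ht => ht.le) hhint).mpr hsupp
  -- assemble
  have hre_int : (∫ t, f t ∂ν).re = ∫ t, (f t).re ∂ν := by
    have := integral_re hfint
    simpa using this.symm
  have hsplit : ∫ t, (f t).re ∂ν = (∫ t, h t ∂ν) + 1/2 := by
    have h1 : ∫ t, h t ∂ν = (∫ t, (f t).re ∂ν) - ∫ t, G t / 2 ∂ν := by
      rw [hh]
      refine integral_sub ?_ (hGint.div_const 2)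
      have := hfint.re
      refine this.congr ?_
      filter_upwards with t
      simp
    have h2 : ∫ t, G t / 2 ∂ν = 1/2 := by
      rw [integral_div, hG1]
    rw [h2] at h1
    linarith
  rw [hsum_eq, hre_int, hsplit]
  linarith
end

section
/- Let q ≥ 1, a > 0, and b_j, B_j ≥ 1 for j = 1,…,q with ∏_{j=1}^q Γ(b_j + B_j) ≥ a·∏_{j=1}^q Γ(b_j). Define U_0 = 1 and U_k = [Γ(a+k)/((k−1)!·Γ(a))] · ∏_{j=1}^q [Γ(b_j)/Γ(b_j + kB_j)] for k ≥ 1, assuming additionally b_j > x* (the location of the minimum of Γ on (0,∞)). Then the sequence (U_k)_{k ≥ 0} is decreasing. -/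
open Real Finset

lemma gamma_mono (xstar : ℝ) (hxp : 0 < xstar)
    (hmin : ∀ x : ℝ, 0 < x → Real.Gamma xstar ≤ Real.Gamma x)
    {x y : ℝ} (hx : xstar ≤ x) (hxy : x ≤ y) :
    Real.Gamma x ≤ Real.Gamma y := by
  have hx0 : 0 < x := lt_of_lt_of_le hxp hx
  have hy0 : 0 < y := lt_of_lt_of_le hx0 hxy
  rcases eq_or_lt_of_le hxy with rfl | hlt
  · exact le_refl _
  rcases eq_or_lt_of_le hx with rfl | hx'
  · exact hmin y hy0
  have hD : 0 < y - xstar := by linarith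
  set t : ℝ := (y - x)/(y - xstar) with ht
  set s : ℝ := (x - xstar)/(y - xstar) with hs
  have ht0 : 0 ≤ t := div_nonneg (by linarith) hD.le
  have hs0 : 0 ≤ s := div_nonneg (by linarith) hD.le
  have hts : t + s = 1 := by rw [ht, hs]; field_simp; ring
  have hpt : t * xstar + s * y = x := by
    rw [ht, hs]; field_simp; ring
  have h := Real.convexOn_Gamma.2 (Set.mem_Ioi.2 hxp) (Set.mem_Ioi.2 hy0) ht0 hs0 hts
  simp only [smul_eq_mul] at h
  rw [hpt] at h
  have h2 : t * Real.Gamma xstar ≤ t * Real.Gamma y :=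
    mul_le_mul_of_nonneg_left (hmin y hy0) ht0
  calc Real.Gamma x ≤ t * Real.Gamma xstar + s * Real.Gamma y := h
    _ ≤ t * Real.Gamma y + s * Real.Gamma y := by linarith
    _ = Real.Gamma y := by rw [← add_mul, hts, one_mul]

lemma gamma_ratio_mono {x y B : ℝ} (hx : 0 < x) (hxy : x ≤ y) (hB : 0 ≤ B) :
    Real.Gamma (x + B) * Real.Gamma y ≤ Real.Gamma x * Real.Gamma (y + B) := by
  have hy : 0 < y := lt_of_lt_of_le hx hxy
  rcases eq_or_lt_of_le hB with rfl | hB'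
  · simp [mul_comm]
  rcases eq_or_lt_of_le hxy with rfl | hxy'
  · ring_nf; exact le_refl _
  have f := Real.convexOn_log_Gamma
  have hLpos : (0:ℝ) < y + B - x := by linarith
  set t : ℝ := B / (y + B - x) with ht
  set s : ℝ := (y - x) / (y + B - x) with hs
  have ht0 : 0 ≤ t := div_nonneg hB hLpos.le
  have hs0 : 0 ≤ s := div_nonneg (by linarith) hLpos.le
  have hst : s + t = 1 := by rw [ht, hs]; field_simp; ring
  have hts : t + s = 1 := by linarith
  have hyB : (0:ℝ) < y + B := by linarith
  have h1 := f.2 (Set.mem_Ioi.2 hx) (Set.mem_Ioi.2 hyB) hs0 ht0 hst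
  have h2 := f.2 (Set.mem_Ioi.2 hx) (Set.mem_Ioi.2 hyB) ht0 hs0 hts
  simp only [smul_eq_mul, Function.comp] at h1 h2
  have hp1 : s * x + t * (y + B) = x + B := by rw [ht, hs]; field_simp; ring
  have hp2 : t * x + s * (y + B) = y := by rw [ht, hs]; field_simp; ring
  rw [hp1] at h1
  rw [hp2] at h2
  set A := Real.log (Real.Gamma x)
  set D := Real.log (Real.Gamma (y + B))
  have e1 : s * A + t * A = A := by rw [← add_mul, hst, one_mul]
  have e2 : s * D + t * D = D := by rw [← add_mul, hst, one_mul]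
  have hsum : Real.log (Real.Gamma (x+B)) + Real.log (Real.Gamma y) ≤ A + D := by linarith
  have p1 : 0 < Real.Gamma (x+B) := Real.Gamma_pos_of_pos (by linarith)
  have p2 : 0 < Real.Gamma y := Real.Gamma_pos_of_pos hy
  have p3 : 0 < Real.Gamma x := Real.Gamma_pos_of_pos hx
  have p4 : 0 < Real.Gamma (y+B) := Real.Gamma_pos_of_pos hyB
  have := Real.exp_le_exp.2 hsum
  rwa [Real.exp_add, Real.exp_add, Real.exp_log p1, Real.exp_log p2, Real.exp_log p3,
    Real.exp_log p4] at this

lemma gamma_step (xstar : ℝ) (hxp : 0 < xstar)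
    (hmin : ∀ x : ℝ, 0 < x → Real.Gamma xstar ≤ Real.Gamma x)
    {x B : ℝ} (hx : 1 ≤ x) (hxs : xstar < x) (hB : 1 ≤ B) :
    (Real.Gamma (x + B) + Real.Gamma x) * Real.Gamma (x + B) ≤
      Real.Gamma (x + 2*B) * Real.Gamma x := by
  have hx0 : 0 < x := by linarith
  have h1 : Real.Gamma ((x+1) + B) * Real.Gamma (x + B) ≤
      Real.Gamma (x+1) * Real.Gamma ((x + B) + B) :=
    gamma_ratio_mono (by linarith) (by linarith) (by linarith)
  have e1 : Real.Gamma ((x+1) + B) = (x + B) * Real.Gamma (x + B) := by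
    rw [show (x+1) + B = (x + B) + 1 by ring, Real.Gamma_add_one (by positivity : x + B ≠ 0)]
  have e2 : Real.Gamma (x+1) = x * Real.Gamma x := Real.Gamma_add_one (by positivity)
  have e3 : (x + B) + B = x + 2*B := by ring
  rw [e1, e2, e3] at h1
  -- B * Γ(x+B) ≥ x * Γ x
  have h2 : x * Real.Gamma x ≤ B * Real.Gamma (x + B) := by
    have hmono : Real.Gamma (x + 1) ≤ Real.Gamma (x + B) :=
      gamma_mono xstar hxp hmin (by linarith) (by linarith)
    rw [e2] at hmono
    have hpos : 0 ≤ Real.Gamma (x + B) := (Real.Gamma_pos_of_pos (by linarith)).le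
    nlinarith
  have hGB : 0 < Real.Gamma (x + B) := Real.Gamma_pos_of_pos (by linarith)
  have hGx : 0 < Real.Gamma x := Real.Gamma_pos_of_pos hx0
  have h3 : x * ((Real.Gamma (x + B) + Real.Gamma x) * Real.Gamma (x + B)) ≤
      x * (Real.Gamma (x + 2*B) * Real.Gamma x) := by nlinarith
  exact le_of_mul_le_mul_left h3 hx0

lemma gamma_key (xstar : ℝ) (hxp : 0 < xstar)
    (hmin : ∀ x : ℝ, 0 < x → Real.Gamma xstar ≤ Real.Gamma x)
    {b B : ℝ} (hb : 1 ≤ b) (hB : 1 ≤ B) (hbx : xstar < b) :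
    ∀ k : ℕ, (Real.Gamma (b+B)/Real.Gamma b + k) * Real.Gamma (b + k*B) ≤
      Real.Gamma (b + ((k:ℝ)+1)*B) := by
  have hGb : 0 < Real.Gamma b := Real.Gamma_pos_of_pos (by linarith)
  intro k
  induction k with
  | zero =>
    simp only [Nat.cast_zero, add_zero, zero_mul, zero_add, one_mul]
    rw [div_mul_cancel₀ _ hGb.ne']
  | succ k ih =>
    set x : ℝ := b + k*B with hxdef
    have hx1 : 1 ≤ x := by nlinarith [Nat.cast_nonneg (α := ℝ) k]
    have hxs : xstar < x := by nlinarith [Nat.cast_nonneg (α := ℝ) k]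
    have hE := gamma_step xstar hxp hmin hx1 hxs hB
    have e1 : b + ((k:ℝ)+1)*B = x + B := by rw [hxdef]; ring
    have e2 : b + ((k:ℝ)+1+1)*B = x + 2*B := by rw [hxdef]; ring
    rw [e1] at ih
    push_cast
    rw [e1, e2]
    -- goal : (c + (k+1)) * Γ(x+B) ≤ Γ(x+2B), ih : (c+k) * Γ x ≤ Γ(x+B)
    have hGx : 0 < Real.Gamma x := Real.Gamma_pos_of_pos (by linarith)
    have hGxB : 0 < Real.Gamma (x+B) := Real.Gamma_pos_of_pos (by linarith)
    have h3 : Real.Gamma x * ((Real.Gamma (b+B)/Real.Gamma b + ((k:ℝ)+1)) * Real.Gamma (x+B)) ≤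
        Real.Gamma x * Real.Gamma (x + 2*B) := by
      nlinarith [mul_le_mul_of_nonneg_right ih hGxB.le]
    exact le_of_mul_le_mul_left h3 hGx

lemma prod_add_le {ι : Type*} (c : ι → ℝ) (k : ℝ) (hk : 0 ≤ k) :
    ∀ (s : Finset ι), s.Nonempty → (∀ j ∈ s, 1 ≤ c j) →
      (∏ j ∈ s, c j) + k ≤ ∏ j ∈ s, (c j + k) := by
  intro s hs
  induction hs using Finset.Nonempty.cons_induction with
  | singleton a => intro _; simp
  | cons a s ha hs ih =>
    intro hc
    rw [Finset.prod_cons, Finset.prod_cons]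
    have h1 : 1 ≤ c a := hc a (Finset.mem_cons_self a s)
    have hc' : ∀ j ∈ s, 1 ≤ c j := fun j hj => hc j (Finset.mem_cons.2 (Or.inr hj))
    have hP : 1 ≤ ∏ j ∈ s, c j := by
      have := Finset.prod_le_prod (f := fun _ : ι => (1:ℝ)) (g := c)
        (fun i _ => by norm_num) (fun i hi => hc' i hi)
      simpa using this
    have ih' := ih hc'
    calc c a * (∏ j ∈ s, c j) + k ≤ (c a + k) * ((∏ j ∈ s, c j) + k) := by nlinarith
      _ ≤ (c a + k) * ∏ j ∈ s, (c j + k) := by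
          apply mul_le_mul_of_nonneg_left ih' (by linarith)

theorem U1_decreasing (q : ℕ) (hq : 1 ≤ q) (a : ℝ) (ha : 0 < a) (b B : Fin q → ℝ)
    (hb1 : ∀ j, 1 ≤ b j) (hB : ∀ j, 1 ≤ B j)
    (xstar : ℝ) (hxstar_pos : 0 < xstar)
    (hxstar : ∀ x : ℝ, 0 < x → Real.Gamma xstar ≤ Real.Gamma x)
    (hbx : ∀ j, xstar < b j)
    (hprod : a * ∏ j, Real.Gamma (b j) ≤ ∏ j, Real.Gamma (b j + B j))
    (U : ℕ → ℝ) (hU0 : U 0 = 1)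
    (hUk : ∀ k, 1 ≤ k → U k = Real.Gamma (a + k) / ((Nat.factorial (k - 1) : ℝ) * Real.Gamma a) *
      ∏ j, Real.Gamma (b j) / Real.Gamma (b j + k * B j)) :
    ∀ k, U (k + 1) ≤ U k := by
  have : Nonempty (Fin q) := ⟨⟨0, hq⟩⟩
  have hGbpos : ∀ j, 0 < Real.Gamma (b j) :=
    fun j => Real.Gamma_pos_of_pos (by linarith [hb1 j])
  have hP0 : 0 < ∏ j, Real.Gamma (b j) := Finset.prod_pos (fun j _ => hGbpos j)
  have hPm : ∀ m : ℕ, 0 < ∏ j, Real.Gamma (b j + (m:ℝ) * B j) := by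
    intro m
    exact Finset.prod_pos (fun j _ => Real.Gamma_pos_of_pos
      (by have := hb1 j; have := hB j; positivity))
  -- the key product inequality
  have core : ∀ m : ℕ, (a + (m:ℝ)) * ∏ j, Real.Gamma (b j + (m:ℝ) * B j) ≤
      ∏ j, Real.Gamma (b j + ((m:ℝ)+1) * B j) := by
    intro m
    set c : Fin q → ℝ := fun j => Real.Gamma (b j + B j) / Real.Gamma (b j) with hc
    have hc1 : ∀ j, 1 ≤ c j := by
      intro j
      rw [hc]
      rw [le_div_iff₀ (hGbpos j), one_mul]
      have h1 : Real.Gamma (b j + 1) ≤ Real.Gamma (b j + B j) := by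
        apply gamma_mono xstar hxstar_pos hxstar (by linarith [hbx j]) (by linarith [hB j])
      have h2 : Real.Gamma (b j + 1) = b j * Real.Gamma (b j) := by
        rw [Real.Gamma_add_one (by linarith [hb1 j] : b j ≠ 0)]
      nlinarith [hb1 j, hGbpos j]
    have hkey : ∀ j, (c j + (m:ℝ)) * Real.Gamma (b j + (m:ℝ)*B j) ≤
        Real.Gamma (b j + ((m:ℝ)+1)*B j) :=
      fun j => gamma_key xstar hxstar_pos hxstar (hb1 j) (hB j) (hbx j) m
    have step1 : (∏ j, (c j + (m:ℝ))) * ∏ j, Real.Gamma (b j + (m:ℝ)*B j) ≤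
        ∏ j, Real.Gamma (b j + ((m:ℝ)+1)*B j) := by
      rw [← Finset.prod_mul_distrib]
      apply Finset.prod_le_prod
      · intro j _
        have : (0:ℝ) ≤ c j + m := by linarith [hc1 j, Nat.cast_nonneg (α := ℝ) m]
        have := (Real.Gamma_pos_of_pos (show (0:ℝ) < b j + (m:ℝ)*B j by
          have := hb1 j; have := hB j; positivity)).le
        positivity
      · intro j _
        exact hkey j
    have step2 : a + (m:ℝ) ≤ ∏ j, (c j + (m:ℝ)) := by
      have h1 : (∏ j, c j) + (m:ℝ) ≤ ∏ j, (c j + (m:ℝ)) :=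
        prod_add_le c m (Nat.cast_nonneg m) Finset.univ Finset.univ_nonempty
          (fun j _ => hc1 j)
      have h2 : a ≤ ∏ j, c j := by
        rw [hc]
        rw [Finset.prod_div_distrib]
        rw [le_div_iff₀ hP0]
        exact hprod
      linarith
    calc (a + (m:ℝ)) * ∏ j, Real.Gamma (b j + (m:ℝ) * B j)
        ≤ (∏ j, (c j + (m:ℝ))) * ∏ j, Real.Gamma (b j + (m:ℝ)*B j) :=
          mul_le_mul_of_nonneg_right step2 (hPm m).le
      _ ≤ _ := step1
  have hGA : 0 < Real.Gamma a := Real.Gamma_pos_of_pos ha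
  intro k
  match k with
  | 0 =>
    rw [hU0, hUk 1 le_rfl]
    simp only [Nat.cast_one, Nat.sub_self, Nat.factorial_zero, one_mul]
    rw [Real.Gamma_add_one ha.ne', Finset.prod_div_distrib]
    have hPB : 0 < ∏ j, Real.Gamma (b j + B j) :=
      Finset.prod_pos (fun j _ => Real.Gamma_pos_of_pos (by linarith [hb1 j, hB j]))
    rw [mul_div_assoc, div_self hGA.ne', mul_one, ← mul_div_assoc, div_le_one hPB]
    exact hprod
  | (k+1) =>
    rw [hUk (k+1) (by omega), hUk (k+2) (by omega)]
    have hf1 : (k + 1 - 1 : ℕ) = k := by omega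
    have hf2 : (k + 2 - 1 : ℕ) = k + 1 := by omega
    rw [hf1, hf2, Nat.factorial_succ]
    have hm := core (k+1)
    push_cast at hm ⊢
    have hGk : 0 < Real.Gamma (a + ((k:ℝ)+1)) := Real.Gamma_pos_of_pos (by positivity)
    have eG : Real.Gamma (a + ((k:ℝ)+1) + 1) = (a + ((k:ℝ)+1)) * Real.Gamma (a + ((k:ℝ)+1)) :=
      Real.Gamma_add_one (by positivity)
    have e2 : a + ((k:ℝ) + 2) = a + ((k:ℝ)+1) + 1 := by ring
    rw [e2, eG]
    have hF : (0:ℝ) < (Nat.factorial k : ℝ) := by positivity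
    have hPk1 : 0 < ∏ j, Real.Gamma (b j + ((k:ℝ)+1) * B j) := by
      have := hPm (k+1); push_cast at this; exact this
    have hPk2 : 0 < ∏ j, Real.Gamma (b j + ((k:ℝ)+2) * B j) := by
      have := hPm (k+2); push_cast at this; exact this
    have hm' : (a + ((k:ℝ)+1)) * ∏ j, Real.Gamma (b j + ((k:ℝ)+1) * B j) ≤
        ((k:ℝ)+1) * ∏ j, Real.Gamma (b j + ((k:ℝ)+2) * B j) := by
      have e3 : ∀ j : Fin q, b j + ((k:ℝ)+1+1)*B j = b j + ((k:ℝ)+2) * B j := by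
        intro j; ring
      calc (a + ((k:ℝ)+1)) * ∏ j, Real.Gamma (b j + ((k:ℝ)+1) * B j)
          ≤ ∏ j, Real.Gamma (b j + ((k:ℝ)+1+1) * B j) := hm
        _ = ∏ j, Real.Gamma (b j + ((k:ℝ)+2) * B j) := by
            apply Finset.prod_congr rfl; intro j _; rw [e3 j]
        _ ≤ ((k:ℝ)+1) * ∏ j, Real.Gamma (b j + ((k:ℝ)+2) * B j) := by
            nlinarith [Nat.cast_nonneg (α := ℝ) k]
    rw [Finset.prod_div_distrib, Finset.prod_div_distrib, div_mul_div_comm, div_mul_div_comm,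
      div_le_div_iff₀ (by positivity) (by positivity)]
    nlinarith [mul_le_mul_of_nonneg_left hm'
      (show (0:ℝ) ≤ Real.Gamma (a + ((k:ℝ)+1)) * (∏ j, Real.Gamma (b j)) *
        (Nat.factorial k : ℝ) * Real.Gamma a by positivity)]
end

section
/- Let f ∈ A (analytic on the unit disc with f(0)=0, f'(0)=1) satisfy |f'(z) − 1| < 1 for all |z| < 1. Then f is convex on the disc of radius 1/2, i.e., Re(1 + z f''(z)/f'(z)) > 0 for |z| < 1/2. -/
open Metric Set Complex

/-- Möbius denominator is nonzero. -/
lemma mobius_denom_ne {a ζ : ℂ} (ha : ‖a‖ < 1) (hζ : ‖ζ‖ < 1) :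
    1 - (starRingEnd ℂ) a * ζ ≠ 0 := by
  intro h
  have h1 : (1 : ℂ) = (starRingEnd ℂ) a * ζ := by linear_combination h
  have : ‖(starRingEnd ℂ) a * ζ‖ < 1 := by
    rw [norm_mul, RCLike.norm_conj]
    nlinarith [norm_nonneg a, norm_nonneg ζ]
  rw [← h1, norm_one] at this
  linarith

/-- Möbius transforms preserve the unit disc. -/
lemma mobius_norm_lt {a ζ : ℂ} (ha : ‖a‖ < 1) (hζ : ‖ζ‖ < 1) :
    ‖(ζ - a) / (1 - (starRingEnd ℂ) a * ζ)‖ < 1 := by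
  have hden := mobius_denom_ne ha hζ
  have hdpos : 0 < ‖1 - (starRingEnd ℂ) a * ζ‖ := norm_pos_iff.2 hden
  rw [norm_div, div_lt_one hdpos]
  have key : Complex.normSq (1 - (starRingEnd ℂ) a * ζ) - Complex.normSq (ζ - a)
      = (1 - Complex.normSq a) * (1 - Complex.normSq ζ) := by
    simp only [Complex.normSq_apply, Complex.sub_re, Complex.sub_im, Complex.mul_re,
      Complex.mul_im, Complex.conj_re, Complex.conj_im, Complex.one_re, Complex.one_im]
    ring
  have ha2 : Complex.normSq a < 1 := by
    rw [← Complex.sq_norm] at *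
    nlinarith [norm_nonneg a, ha]
  have hζ2 : Complex.normSq ζ < 1 := by
    rw [← Complex.sq_norm] at *
    nlinarith [norm_nonneg ζ, hζ]
  have hlt : Complex.normSq (ζ - a) < Complex.normSq (1 - (starRingEnd ℂ) a * ζ) := by
    nlinarith
  have := Real.sqrt_lt_sqrt (Complex.normSq_nonneg _) hlt
  simpa only [Complex.norm_def] using this

/-- Differentiability of the Möbius transform at a point where the denominator is nonzero. -/
lemma mobius_differentiableAt {a ζ₀ : ℂ} (h : 1 - (starRingEnd ℂ) a * ζ₀ ≠ 0) :
    DifferentiableAt ℂ (fun ζ => (ζ - a) / (1 - (starRingEnd ℂ) a * ζ)) ζ₀ := by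
  apply DifferentiableAt.div
  · fun_prop
  · fun_prop
  · exact h

/-- Derivative of the Möbius transform. -/
lemma mobius_deriv (a : ℂ) {ζ₀ : ℂ} (h : 1 - (starRingEnd ℂ) a * ζ₀ ≠ 0) :
    deriv (fun ζ => (ζ - a) / (1 - (starRingEnd ℂ) a * ζ)) ζ₀
      = (1 - (starRingEnd ℂ) a * a) / (1 - (starRingEnd ℂ) a * ζ₀) ^ 2 := by
  have h1 : HasDerivAt (fun ζ : ℂ => ζ - a) 1 ζ₀ := by
    simpa using (hasDerivAt_id ζ₀).sub_const a
  have h2 : HasDerivAt (fun ζ : ℂ => 1 - (starRingEnd ℂ) a * ζ) (-(starRingEnd ℂ) a) ζ₀ := by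
    simpa using (((hasDerivAt_id ζ₀).const_mul ((starRingEnd ℂ) a)).const_sub 1)
  have := (h1.div h2 h).deriv
  rw [show (fun ζ => (ζ - a) / (1 - (starRingEnd ℂ) a * ζ)) =
    ((fun ζ => ζ - a) / fun ζ => 1 - (starRingEnd ℂ) a * ζ) from rfl, this]
  field_simp
  ring

theorem convex_in_half_disc (f : ℂ → ℂ)
    (hf : AnalyticOn ℂ f (Metric.ball (0 : ℂ) 1))
    (hf0 : f 0 = 0) (hf'0 : deriv f 0 = 1)
    (hbound : ∀ z : ℂ, ‖z‖ < 1 → ‖deriv f z - 1‖ < 1) :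
    ∀ z : ℂ, ‖z‖ < 1 / 2 → 0 < (1 + z * deriv (deriv f) z / deriv f z).re := by
  intro z hz
  have hz1 : ‖z‖ < 1 := by linarith
  have hzball : z ∈ ball (0 : ℂ) 1 := by simpa [mem_ball, dist_eq_norm] using hz1
  -- `deriv f` is analytic on the ball
  have hfN : AnalyticOnNhd ℂ f (ball (0 : ℂ) 1) :=
    (isOpen_ball.analyticOn_iff_analyticOnNhd).1 hf
  have hgN : AnalyticOnNhd ℂ (deriv f) (ball (0 : ℂ) 1) := hfN.deriv
  set w : ℂ → ℂ := fun ζ => deriv f ζ - 1 with hw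
  have hwdiff : DifferentiableOn ℂ w (ball (0 : ℂ) 1) :=
    fun x hx => ((hgN x hx).differentiableAt.sub_const 1).differentiableWithinAt
  have hwmaps : MapsTo w (ball (0 : ℂ) 1) (ball (0 : ℂ) 1) := by
    intro x hx
    rw [mem_ball, dist_eq_norm] at hx ⊢
    simpa using hbound x (by simpa using hx)
  have hw0 : w 0 = 0 := by simp [hw, hf'0]
  set a : ℂ := w z with haa
  have ha1 : ‖a‖ < 1 := by simpa using hbound z hz1
  -- Schwarz lemma : ‖a‖ ≤ ‖z‖
  have hschwarz : ‖a‖ ≤ ‖z‖ := by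
    have := Complex.norm_le_norm_of_mapsTo_ball hwdiff (hwmaps.mono_right ball_subset_closedBall) hw0
      (z := z) (by simpa using hz1)
    simpa using this
  -- Möbius transforms
  set ψ : ℂ → ℂ := fun ζ => (ζ - (-z)) / (1 - (starRingEnd ℂ) (-z) * ζ) with hψ
  set φ : ℂ → ℂ := fun ζ => (ζ - a) / (1 - (starRingEnd ℂ) a * ζ) with hφ
  have hznorm : ‖(-z : ℂ)‖ < 1 := by simpa using hz1
  have hψmaps : MapsTo ψ (ball (0 : ℂ) 1) (ball (0 : ℂ) 1) := by
    intro x hx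
    rw [mem_ball, dist_eq_norm, sub_zero] at hx ⊢
    simp only [hψ]
    exact mobius_norm_lt hznorm hx
  have hφmaps : MapsTo φ (ball (0 : ℂ) 1) (ball (0 : ℂ) 1) := by
    intro x hx
    rw [mem_ball, dist_eq_norm, sub_zero] at hx ⊢
    simp only [hφ]
    exact mobius_norm_lt ha1 hx
  set H : ℂ → ℂ := φ ∘ w ∘ ψ with hH
  have hψ0 : ψ 0 = z := by simp [hψ]
  have hwψ0 : w (ψ 0) = a := by rw [hψ0]
  have hφa : φ a = 0 := by simp [hφ]
  have hH0 : H 0 = 0 := by simp [hH, hwψ0, hφa]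
  -- H is differentiable on the unit ball
  have hHdiff : DifferentiableOn ℂ H (ball (0 : ℂ) 1) := by
    intro x hx
    have hx1 : ‖x‖ < 1 := by simpa [mem_ball, dist_eq_norm] using hx
    have hψx : ψ x ∈ ball (0 : ℂ) 1 := hψmaps hx
    have hwψx : w (ψ x) ∈ ball (0 : ℂ) 1 := hwmaps hψx
    have d1 : DifferentiableAt ℂ ψ x :=
      mobius_differentiableAt (mobius_denom_ne hznorm hx1)
    have d2 : DifferentiableAt ℂ w (ψ x) :=
      ((hgN _ hψx).differentiableAt.sub_const 1)
    have d3 : DifferentiableAt ℂ φ (w (ψ x)) :=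
      mobius_differentiableAt (mobius_denom_ne ha1
        (by simpa [mem_ball, dist_eq_norm] using hwψx))
    exact (DifferentiableAt.comp x d3 (DifferentiableAt.comp x d2 d1)).differentiableWithinAt
  have hHmaps : MapsTo H (ball (0 : ℂ) 1) (ball (H 0) 1) := by
    rw [hH0]
    exact fun x hx => hφmaps (hwmaps (hψmaps hx))
  -- Schwarz at the origin for H
  have hHderiv : ‖deriv H 0‖ ≤ 1 := by
    have := Complex.norm_deriv_le_div_of_mapsTo_ball hHdiff (hHmaps.mono_right ball_subset_closedBall) one_pos
    simpa using this
  -- compute deriv H 0 by the chain rule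
  have d1 : DifferentiableAt ℂ ψ 0 := by
    refine mobius_differentiableAt ?_
    exact mobius_denom_ne hznorm (by simpa using (one_pos : (0:ℝ) < 1))
  have d2 : DifferentiableAt ℂ w (ψ 0) := by
    rw [hψ0]; exact ((hgN _ hzball).differentiableAt.sub_const 1)
  have d3 : DifferentiableAt ℂ φ (w (ψ 0)) := by
    rw [hwψ0]
    exact mobius_differentiableAt (mobius_denom_ne ha1 ha1)
  have hderivψ0 : deriv ψ 0 = 1 - (starRingEnd ℂ) (-z) * (-z) := by
    rw [hψ, mobius_deriv (-z) (mobius_denom_ne hznorm (by simpa using (one_pos : (0:ℝ) < 1)))]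
    simp
  have hderivφa : deriv φ a = 1 / (1 - (starRingEnd ℂ) a * a) := by
    rw [hφ, mobius_deriv a (mobius_denom_ne ha1 ha1)]
    have hne : 1 - (starRingEnd ℂ) a * a ≠ 0 := mobius_denom_ne ha1 ha1
    field_simp
  have hchain : deriv H 0 = deriv φ (w (ψ 0)) * (deriv w (ψ 0) * deriv ψ 0) := by
    rw [hH]
    rw [deriv_comp 0 d3 (d2.comp 0 d1), deriv_comp 0 d2 d1]
    rfl
  -- norms of the Möbius factors
  have hnormSq_a : Complex.normSq a < 1 := by
    rw [← Complex.sq_norm]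
    nlinarith [norm_nonneg a, ha1]
  have hnormSq_z : Complex.normSq z < 1 := by
    rw [← Complex.sq_norm]
    nlinarith [norm_nonneg z, hz1]
  have hconj_a : (1 : ℂ) - (starRingEnd ℂ) a * a = ((1 - Complex.normSq a : ℝ) : ℂ) := by
    rw [mul_comm, Complex.mul_conj]; push_cast; ring
  have hconj_z : (1 : ℂ) - (starRingEnd ℂ) (-z) * (-z) = ((1 - Complex.normSq z : ℝ) : ℂ) := by
    rw [mul_comm, Complex.mul_conj]; push_cast; simp [Complex.normSq_neg]
  -- the Schwarz–Pick bound on deriv w z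
  have hwz : deriv w z = deriv (deriv f) z := by
    rw [hw]; exact deriv_sub_const 1
  have hpick : ‖deriv (deriv f) z‖ * (1 - Complex.normSq z) ≤ 1 - Complex.normSq a := by
    have h1 : ‖deriv H 0‖
        = ‖deriv (deriv f) z‖ * (1 - Complex.normSq z) / (1 - Complex.normSq a) := by
      rw [hchain, hwψ0, hψ0, hwz, hderivφa, hderivψ0, hconj_a, hconj_z]
      rw [norm_mul, norm_div, norm_one, norm_mul]
      rw [Complex.norm_real, Complex.norm_real]
      rw [Real.norm_of_nonneg (by linarith), Real.norm_of_nonneg (by linarith)]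
      ring
    rw [h1] at hHderiv
    rw [div_le_one (by linarith)] at hHderiv
    linarith
  -- final estimate
  set r : ℝ := ‖z‖ with hr
  set s : ℝ := ‖a‖ with hs
  set d : ℝ := ‖deriv (deriv f) z‖ with hd
  have hsr : s ≤ r := hschwarz
  have hr2 : r < 1 / 2 := hz
  have hs0 : 0 ≤ s := norm_nonneg _
  have hd0 : 0 ≤ d := norm_nonneg _
  have hnsz : Complex.normSq z = r ^ 2 := by rw [hr, ← Complex.sq_norm]
  have hnsa : Complex.normSq a = s ^ 2 := by rw [hs, ← Complex.sq_norm]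
  have hpick' : d * (1 - r ^ 2) ≤ 1 - s ^ 2 := by rw [← hnsz, ← hnsa]; exact hpick
  have hfz : deriv f z = 1 + a := by rw [haa, hw]; ring
  have hfznorm : 1 - s ≤ ‖deriv f z‖ := by
    rw [hfz]
    have h := norm_sub_norm_le (1 : ℂ) (-a)
    simp only [norm_one, norm_neg, sub_neg_eq_add] at h
    rw [hs]
    linarith
  have hterm : ‖z * deriv (deriv f) z / deriv f z‖ < 1 := by
    rw [norm_div, norm_mul]
    have hfzpos : 0 < ‖deriv f z‖ := by linarith
    rw [div_lt_one hfzpos]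
    have key : r * d < 1 - s := by nlinarith
    calc r * d < 1 - s := key
    _ ≤ ‖deriv f z‖ := hfznorm
  have hre : -(1 : ℝ) < (z * deriv (deriv f) z / deriv f z).re := by
    have h1 : |(z * deriv (deriv f) z / deriv f z).re| ≤ ‖z * deriv (deriv f) z / deriv f z‖ :=
      Complex.abs_re_le_norm _
    have h2 := abs_le.1 h1
    linarith [h2.1]
  rw [Complex.add_re, Complex.one_re]
  linarith
end

section
/- Let p ≥ 1 and for each i let a_i > 0 and b_i > (a_i − 1 + √((a_i+1)² + 4a_i(e−1)(a_i+1)))/2. Then b_i² + (1 − a_i)b_i + a_i(−1 + (1−e)(a_i+1)) > 0 for each i, and the normalized hypergeometric function z·_pF_{p+1}[a_1,…,a_p; 2, b_1,…,b_p | z] is convex in the disc of radius 1/2. -/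
lemma index_ineq (a b : ℝ) (ha : 0 < a)
    (hb : (a - 1 + Real.sqrt ((a + 1) ^ 2 + 4 * a * (Real.exp 1 - 1) * (a + 1))) / 2 < b) :
    0 < b ^ 2 + (1 - a) * b + a * (-1 + (1 - Real.exp 1) * (a + 1)) ∧ a < b ∧ 4 * a < 3 * b := by
  have he : (2.7:ℝ) < Real.exp 1 := lt_trans (by norm_num) Real.exp_one_gt_d9
  set D := (a + 1) ^ 2 + 4 * a * (Real.exp 1 - 1) * (a + 1) with hD
  have hDpos : (a+1)^2 < D := by
    have h1 : 0 < a * (a+1) := by nlinarith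
    nlinarith
  have hDnn : 0 ≤ D := le_trans (by positivity) hDpos.le
  have hsq : a + 1 < Real.sqrt D := (Real.lt_sqrt (by linarith)).2 hDpos
  have hab : a < b := by linarith
  have h2 : D < (2*b - a + 1)^2 := by
    nlinarith [Real.sq_sqrt hDnn, Real.sqrt_nonneg D]
  have hq : 0 < b ^ 2 + (1 - a) * b + a * (-1 + (1 - Real.exp 1) * (a + 1)) := by nlinarith
  refine ⟨hq, hab, ?_⟩
  by_contra hcon
  push_neg at hcon
  have k1 : 0 ≤ (4*a - 3*b) * (b - a) := mul_nonneg (by linarith) (by linarith)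
  have k2 : 0 ≤ b * (4*a - 3*b) := mul_nonneg (by linarith) (by linarith)
  nlinarith [mul_pos ha ha, mul_pos ha (show (0:ℝ) < a + 1 by linarith)]


lemma two_pow_le_fact (k : ℕ) : (2:ℝ)^k ≤ (Nat.factorial (k+1) : ℝ) := by
  induction k with
  | zero => norm_num
  | succ n ih =>
      have h2 : ((Nat.factorial (n+2)):ℝ) = (n+2) * Nat.factorial (n+1) := by
        push_cast [Nat.factorial_succ]; ring
      have hn : (2:ℝ) ≤ (n:ℝ) + 2 := by have := Nat.cast_nonneg (α := ℝ) n; linarith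
      calc (2:ℝ)^(n+1) = 2 * 2^n := by ring
        _ ≤ ((n:ℝ)+2) * Nat.factorial (n+1) := by
            apply mul_le_mul hn ih (by positivity) (by positivity)
        _ = _ := h2.symm

noncomputable def Fc (c : ℕ → ℝ) (k : ℕ) (w : ℂ) : ℂ :=
  (c k : ℂ) * w ^ (k+1) / (Nat.factorial k : ℂ)

noncomputable def F1c (c : ℕ → ℝ) (k : ℕ) (w : ℂ) : ℂ :=
  ((c k * ((k:ℝ)+1) / (Nat.factorial k : ℝ) : ℝ) : ℂ) * w ^ k

noncomputable def F2c (c : ℕ → ℝ) (k : ℕ) (w : ℂ) : ℂ :=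
  ((c k * ((k:ℝ)+1) * (k:ℝ) / (Nat.factorial k : ℝ) : ℝ) : ℂ) * w ^ (k-1)

lemma hasDerivAt_Fc (c : ℕ → ℝ) (k : ℕ) (w : ℂ) : HasDerivAt (Fc c k) (F1c c k w) w := by
  have h := ((hasDerivAt_pow (k+1) w).const_mul ((c k : ℂ))).div_const ((Nat.factorial k : ℂ))
  have e : F1c c k w = (c k : ℂ) * (((k+1:ℕ):ℂ) * w ^ (k+1-1)) / (Nat.factorial k : ℂ) := by
    simp only [F1c, Nat.add_sub_cancel]
    push_cast; ring
  rw [e]; exact h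

lemma hasDerivAt_F1c (c : ℕ → ℝ) (k : ℕ) (w : ℂ) : HasDerivAt (F1c c k) (F2c c k w) w := by
  have h := (hasDerivAt_pow k w).const_mul ((c k * ((k:ℝ)+1) / (Nat.factorial k : ℝ) : ℝ) : ℂ)
  have e : F2c c k w = ((c k * ((k:ℝ)+1) / (Nat.factorial k : ℝ) : ℝ) : ℂ) * (((k:ℕ):ℂ) * w ^ (k-1)) := by
    simp only [F2c]
    push_cast; ring
  rw [e]; exact h

lemma norm_F1c (c : ℕ → ℝ) (k : ℕ) (w : ℂ) (hc : 0 ≤ c k) :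
    ‖F1c c k w‖ = c k * ((k:ℝ)+1) / (Nat.factorial k : ℝ) * ‖w‖^k := by
  rw [F1c, norm_mul, norm_pow, Complex.norm_real, Real.norm_eq_abs, abs_of_nonneg (by positivity)]

lemma norm_F2c (c : ℕ → ℝ) (k : ℕ) (w : ℂ) (hc : 0 ≤ c k) :
    ‖F2c c k w‖ = c k * ((k:ℝ)+1) * (k:ℝ) / (Nat.factorial k : ℝ) * ‖w‖^(k-1) := by
  rw [F2c, norm_mul, norm_pow, Complex.norm_real, Real.norm_eq_abs, abs_of_nonneg (by positivity)]




section
variable (c : ℕ → ℝ) (hc0 : c 0 = 1) (hcnn : ∀ k, 0 ≤ c k)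
  (hcb : ∀ k, 1 ≤ k → c k ≤ (3/4) / (Nat.factorial (k+1) : ℝ))

include hc0 hcnn hcb in
lemma coefbd1 (k : ℕ) : c k * ((k:ℝ)+1) / (Nat.factorial k : ℝ) ≤ 2 * (1/2)^k := by
  rcases Nat.eq_zero_or_pos k with rfl | hk
  · simp [hc0]
  · obtain ⟨m, rfl⟩ : ∃ m, k = m + 1 := ⟨k - 1, by omega⟩
    push_cast
    set q : ℝ := (Nat.factorial (m+1) : ℝ) with hq
    have hq0 : 0 < q := by rw [hq]; exact_mod_cast Nat.factorial_pos _
    have hq1 : (1:ℝ) ≤ q := by rw [hq]; exact_mod_cast Nat.factorial_pos _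
    have h2m : (2:ℝ)^m ≤ q := two_pow_le_fact m
    have hfs : ((Nat.factorial (m+2)):ℝ) = ((m:ℝ)+2) * q := by
      rw [hq]; push_cast [Nat.factorial_succ (m+1)]; ring
    have hcle : c (m+1) ≤ (3/4) / (((m:ℝ)+2) * q) := by
      have h := hcb (m+1) (by omega)
      rw [show m+1+1 = m+2 from rfl, hfs] at h; exact h
    have hm2 : (0:ℝ) < (m:ℝ)+2 := by positivity
    calc c (m+1) * ((m:ℝ) + 1 + 1) / q
        ≤ ((3/4) / (((m:ℝ)+2) * q)) * ((m:ℝ) + 1 + 1) / q := by gcongr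
      _ = (3/4) / (q * q) := by field_simp; ring
      _ ≤ 1 / 2^m := div_le_div₀ (by norm_num) (by norm_num) (by positivity) (by nlinarith)
      _ = 2 * (1/2)^(m+1) := by
          rw [one_div_pow]; rw [pow_succ]; field_simp
end







section
variable (c : ℕ → ℝ) (hc0 : c 0 = 1) (hcnn : ∀ k, 0 ≤ c k)
  (hcb : ∀ k, 1 ≤ k → c k ≤ (3/4) / (Nat.factorial (k+1) : ℝ))

include hcnn hcb in
lemma coefbd2 (k : ℕ) :
    c k * ((k:ℝ)+1) * (k:ℝ) / (Nat.factorial k : ℝ) ≤ 4 * (1/2)^k := by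
  rcases Nat.eq_zero_or_pos k with rfl | hk
  · simp
  · obtain ⟨m, rfl⟩ : ∃ m, k = m + 1 := ⟨k - 1, by omega⟩
    push_cast
    set q : ℝ := (Nat.factorial (m+1) : ℝ) with hq
    have hq0 : 0 < q := by rw [hq]; exact_mod_cast Nat.factorial_pos _
    have hmq : (m:ℝ)+1 ≤ q := by rw [hq]; exact_mod_cast Nat.self_le_factorial (m+1)
    have h2m : (2:ℝ)^m ≤ q := two_pow_le_fact m
    have hfs : ((Nat.factorial (m+2)):ℝ) = ((m:ℝ)+2) * q := by
      rw [hq]; push_cast [Nat.factorial_succ (m+1)]; ring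
    have hcle : c (m+1) ≤ (3/4) / (((m:ℝ)+2) * q) := by
      have h := hcb (m+1) (by omega)
      rw [show m+1+1 = m+2 from rfl, hfs] at h; exact h
    calc c (m+1) * ((m:ℝ) + 1 + 1) * ((m:ℝ)+1) / q
        ≤ ((3/4) / (((m:ℝ)+2) * q)) * ((m:ℝ) + 1 + 1) * ((m:ℝ)+1) / q := by gcongr
      _ = (3/4) * (((m:ℝ)+1) / (q * q)) := by field_simp; ring
      _ ≤ 4 * (1/2)^(m+1) := by
          have key : ((m:ℝ)+1) * 2^m ≤ q * q := mul_le_mul hmq h2m (by positivity) hq0.le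
          rw [show (3/4:ℝ)*(((m:ℝ)+1)/(q*q)) = (3*((m:ℝ)+1)/4)/(q*q) by ring,
            show (4:ℝ)*(1/2)^(m+1) = 2/2^m by rw [one_div_pow, pow_succ]; field_simp; ring,
            div_le_div_iff₀ (by positivity) (by positivity)]
          nlinarith [key]
      
include hc0 hcnn hcb in
lemma bd1 (k : ℕ) (w : ℂ) (hw : ‖w‖ ≤ 1) : ‖F1c c k w‖ ≤ 2 * (1/2)^k := by
  rw [norm_F1c c k w (hcnn k)]
  calc c k * ((k:ℝ)+1) / (Nat.factorial k : ℝ) * ‖w‖^k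
      ≤ (2 * (1/2)^k) * 1 :=
        mul_le_mul (coefbd1 c hc0 hcnn hcb k) (pow_le_one₀ (norm_nonneg w) hw)
          (by positivity) (by positivity)
    _ = 2 * (1/2)^k := mul_one _

include hcnn hcb in
lemma bd2 (k : ℕ) (w : ℂ) (hw : ‖w‖ ≤ 1) : ‖F2c c k w‖ ≤ 4 * (1/2)^k := by
  rw [norm_F2c c k w (hcnn k)]
  calc c k * ((k:ℝ)+1) * (k:ℝ) / (Nat.factorial k : ℝ) * ‖w‖^(k-1)
      ≤ (4 * (1/2)^k) * 1 :=
        mul_le_mul (coefbd2 c hcnn hcb k) (pow_le_one₀ (norm_nonneg w) hw)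
          (by positivity) (by positivity)
    _ = 4 * (1/2)^k := mul_one _
end





section
variable (c : ℕ → ℝ) (hcnn : ∀ k, 0 ≤ c k)
  (hcb : ∀ k, 1 ≤ k → c k ≤ (3/4) / (Nat.factorial (k+1) : ℝ))

include hcnn hcb in
lemma bd3 (k : ℕ) (z : ℂ) (hz : ‖z‖ ≤ 1/2) : ‖F1c c (k+1) z‖ ≤ (3/8) * (1/8)^k := by
  rw [norm_F1c c (k+1) z (hcnn (k+1))]
  push_cast
  set q : ℝ := (Nat.factorial (k+1) : ℝ) with hq
  have hq0 : 0 < q := by rw [hq]; exact_mod_cast Nat.factorial_pos _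
  have h2k : (2:ℝ)^k ≤ q := two_pow_le_fact k
  have hfs : ((Nat.factorial (k+2)):ℝ) = ((k:ℝ)+2) * q := by
    rw [hq]; push_cast [Nat.factorial_succ (k+1)]; ring
  have hcle : c (k+1) ≤ (3/4) / (((k:ℝ)+2) * q) := by
    have h := hcb (k+1) (by omega)
    rw [show k+1+1 = k+2 from rfl, hfs] at h; exact h
  have hxy : (1/2:ℝ)^k * 2^k = 1 := by rw [← mul_pow]; norm_num
  calc c (k+1) * ((k:ℝ) + 1 + 1) / q * ‖z‖^(k+1)
      ≤ ((3/4) / (((k:ℝ)+2) * q)) * ((k:ℝ) + 1 + 1) / q * (1/2)^(k+1) := by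
        gcongr
    _ = (3/8) * ((1/2)^k / (q*q)) := by
        rw [pow_succ]
        field_simp; ring
    _ ≤ (3/8) * (1/8)^k := by
        gcongr (3/8) * ?_
        rw [div_le_iff₀ (by positivity),
          show ((1:ℝ)/8)^k = (1/2)^k*(1/2)^k*(1/2)^k by rw [← mul_pow, ← mul_pow]; norm_num]
        calc (1/2:ℝ)^k = (1/2)^k*(1/2)^k*(1/2)^k*(2^k*2^k) := by
              rw [show (1/2:ℝ)^k*(1/2)^k*(1/2)^k*(2^k*2^k) = (1/2)^k*(((1/2)^k*2^k)*((1/2)^k*2^k)) by ring, hxy]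
              ring
          _ ≤ (1/2)^k*(1/2)^k*(1/2)^k*(q*q) := by gcongr
        
include hcnn hcb in
lemma bd4 (k : ℕ) (z : ℂ) (hz : ‖z‖ ≤ 1/2) : ‖F2c c (k+1) z‖ ≤ (3/4) * (1/4)^k := by
  rw [norm_F2c c (k+1) z (hcnn (k+1))]
  rw [show k+1-1 = k from rfl]
  push_cast
  set q : ℝ := (Nat.factorial (k+1) : ℝ) with hq
  have hq0 : 0 < q := by rw [hq]; exact_mod_cast Nat.factorial_pos _
  have h2k : (2:ℝ)^k ≤ q := two_pow_le_fact k
  have hkq : (k:ℝ)+1 ≤ q := by rw [hq]; exact_mod_cast Nat.self_le_factorial (k+1)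
  have hfs : ((Nat.factorial (k+2)):ℝ) = ((k:ℝ)+2) * q := by
    rw [hq]; push_cast [Nat.factorial_succ (k+1)]; ring
  have hcle : c (k+1) ≤ (3/4) / (((k:ℝ)+2) * q) := by
    have h := hcb (k+1) (by omega)
    rw [show k+1+1 = k+2 from rfl, hfs] at h; exact h
  have hxy : (1/2:ℝ)^k * 2^k = 1 := by rw [← mul_pow]; norm_num
  calc c (k+1) * ((k:ℝ) + 1 + 1) * ((k:ℝ)+1) / q * ‖z‖^k
      ≤ ((3/4) / (((k:ℝ)+2) * q)) * ((k:ℝ) + 1 + 1) * ((k:ℝ)+1) / q * (1/2)^k := by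
        gcongr
    _ = (3/4) * (((k:ℝ)+1) * (1/2)^k / (q*q)) := by field_simp; ring
    _ ≤ (3/4) * (1/4)^k := by
        gcongr (3/4) * ?_
        rw [div_le_iff₀ (by positivity),
          show ((1:ℝ)/4)^k = (1/2)^k*(1/2)^k by rw [← mul_pow]; norm_num]
        calc ((k:ℝ)+1) * (1/2)^k
            = (1/2)^k*(1/2)^k*(((k:ℝ)+1)*2^k) := by
              rw [show (1/2:ℝ)^k*(1/2)^k*(((k:ℝ)+1)*2^k) = ((k:ℝ)+1)*(1/2)^k*((1/2)^k*2^k) by ring, hxy]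
              ring
          _ ≤ (1/2)^k*(1/2)^k*(q*q) := by
              gcongr (1/2:ℝ)^k*(1/2)^k*?_
              exact mul_le_mul hkq h2k (by positivity) hq0.le
end


noncomputable def rr (x y : ℝ) (k : ℕ) : ℝ :=
  (Real.Gamma (x + k) / Real.Gamma x) / (Real.Gamma (y + k) / Real.Gamma y)

lemma Gamma_shift_pos {x : ℝ} (hx : 0 < x) (k : ℕ) : 0 < Real.Gamma (x + k) :=
  Real.Gamma_pos_of_pos (by positivity)

lemma rr_pos {x y : ℝ} (hx : 0 < x) (hy : 0 < y) (k : ℕ) : 0 < rr x y k := by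
  unfold rr
  have h1 := Gamma_shift_pos hx k
  have h2 := Gamma_shift_pos hy k
  have h3 := Real.Gamma_pos_of_pos hx
  have h4 := Real.Gamma_pos_of_pos hy
  positivity

lemma rr_zero (x y : ℝ) (hx : 0 < x) (hy : 0 < y) : rr x y 0 = 1 := by
  unfold rr
  have h3 := Real.Gamma_pos_of_pos hx
  have h4 := Real.Gamma_pos_of_pos hy
  simp [Nat.cast_zero, add_zero, div_self h3.ne', div_self h4.ne']

lemma rr_succ (x y : ℝ) (hx : 0 < x) (hy : 0 < y) (k : ℕ) :
    rr x y (k+1) = rr x y k * ((x + k) / (y + k)) := by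
  unfold rr
  have hxk : (0:ℝ) < x + k := by positivity
  have hyk : (0:ℝ) < y + k := by positivity
  have ex : Real.Gamma (x + (k+1:ℕ)) = (x + k) * Real.Gamma (x + k) := by
    push_cast
    rw [show x + ((k:ℝ) + 1) = (x + k) + 1 by ring, Real.Gamma_add_one hxk.ne']
  have ey : Real.Gamma (y + (k+1:ℕ)) = (y + k) * Real.Gamma (y + k) := by
    push_cast
    rw [show y + ((k:ℝ) + 1) = (y + k) + 1 by ring, Real.Gamma_add_one hyk.ne']
  rw [ex, ey]
  have h1 := (Gamma_shift_pos hx k).ne'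
  have h2 := (Gamma_shift_pos hy k).ne'
  have h3 := (Real.Gamma_pos_of_pos hx).ne'
  have h4 := (Real.Gamma_pos_of_pos hy).ne'
  field_simp

lemma rr_le_one {x y : ℝ} (hx : 0 < x) (hxy : x < y) (k : ℕ) : rr x y k ≤ 1 := by
  have hy : 0 < y := lt_trans hx hxy
  induction k with
  | zero => rw [rr_zero x y hx hy]
  | succ n ih =>
      rw [rr_succ x y hx hy n]
      have hq : (x + n) / (y + n) ≤ 1 := by
        apply div_le_one_of_le₀ (by linarith) (by positivity)
      calc rr x y n * ((x+n)/(y+n)) ≤ 1 * 1 :=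
            mul_le_mul ih hq (by positivity) (by norm_num)
        _ = 1 := by norm_num

lemma rr_le_ratio {x y : ℝ} (hx : 0 < x) (hxy : x < y) (k : ℕ) (hk : 1 ≤ k) :
    rr x y k ≤ x / y := by
  have hy : 0 < y := lt_trans hx hxy
  induction k with
  | zero => omega
  | succ n ih =>
      rcases Nat.eq_zero_or_pos n with rfl | hn
      · rw [rr_succ x y hx hy 0, rr_zero x y hx hy]
        simp
      · rw [rr_succ x y hx hy n]
        have hq : (x + n) / (y + n) ≤ 1 :=
          div_le_one_of_le₀ (by linarith) (by positivity)
        calc rr x y n * ((x+n)/(y+n)) ≤ (x/y) * 1 :=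
              mul_le_mul (ih hn) hq (by positivity) (by positivity)
          _ = x / y := by ring








lemma core (c : ℕ → ℝ) (hc0 : c 0 = 1) (hcnn : ∀ k, 0 ≤ c k)
    (hcb : ∀ k, 1 ≤ k → c k ≤ (3/4) / (Nat.factorial (k+1) : ℝ))
    (f : ℂ → ℂ)
    (hf : ∀ z : ℂ, f z = ∑' k : ℕ, (c k : ℝ) * z ^ (k+1) / (Nat.factorial k : ℂ))
    (z : ℂ) (hz : ‖z‖ < 1/2) :
    0 < (1 + z * deriv (deriv f) z / deriv f z).re := by
  have hu : Summable (fun k : ℕ => 2 * (1/2:ℝ)^k) :=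
    (summable_geometric_of_lt_one (by norm_num) (by norm_num)).mul_left 2
  have hv : Summable (fun k : ℕ => 4 * (1/2:ℝ)^k) :=
    (summable_geometric_of_lt_one (by norm_num) (by norm_num)).mul_left 4
  have hzle : ‖z‖ ≤ 1/2 := hz.le
  have hz1 : z ∈ Metric.ball (0:ℂ) 1 := mem_ball_zero_iff.2 (by linarith)
  have h01 : (0:ℂ) ∈ Metric.ball (0:ℂ) 1 := mem_ball_zero_iff.2 (by norm_num)
  have hprec : IsPreconnected (Metric.ball (0:ℂ) 1) := (convex_ball _ _).isPreconnected
  have hF0 : Summable (fun k => Fc c k 0) := by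
    have : (fun k => Fc c k 0) = fun _ => 0 := by
      funext k; simp [Fc]
    rw [this]; exact summable_zero
  have hF10 : Summable (fun k => F1c c k 0) := by
    apply summable_of_ne_finset_zero (s := {0})
    intro k hk
    have hk0 : k ≠ 0 := by simpa using hk
    simp [F1c, zero_pow hk0]
  have hball : ∀ w : ℂ, w ∈ Metric.ball (0:ℂ) 1 → ‖w‖ ≤ 1 :=
    fun w hw => (mem_ball_zero_iff.1 hw).le
  -- first derivative
  have key1 : ∀ w ∈ Metric.ball (0:ℂ) 1, HasDerivAt f (∑' k, F1c c k w) w := by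
    intro w hw
    have hfun : f = fun x => ∑' k, Fc c k x := by
      funext x; rw [hf x]; rfl
    rw [hfun]
    exact hasDerivAt_tsum_of_isPreconnected hu Metric.isOpen_ball hprec
      (fun k y _ => hasDerivAt_Fc c k y)
      (fun k y hy => bd1 c hc0 hcnn hcb k y (hball y hy)) h01 hF0 hw
  have keyd1 : ∀ w ∈ Metric.ball (0:ℂ) 1, deriv f w = ∑' k, F1c c k w :=
    fun w hw => (key1 w hw).deriv
  -- second derivative
  have key2 : ∀ w ∈ Metric.ball (0:ℂ) 1,
      HasDerivAt (fun x => ∑' k, F1c c k x) (∑' k, F2c c k w) w := by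
    intro w hw
    exact hasDerivAt_tsum_of_isPreconnected hv Metric.isOpen_ball hprec
      (fun k y _ => hasDerivAt_F1c c k y)
      (fun k y hy => bd2 c hcnn hcb k y (hball y hy)) h01 hF10 hw
  have keyd2 : deriv (deriv f) z = ∑' k, F2c c k z := by
    have hev : deriv f =ᶠ[nhds z] (fun x => ∑' k, F1c c k x) := by
      filter_upwards [Metric.isOpen_ball.mem_nhds hz1] with w hw using keyd1 w hw
    rw [hev.deriv_eq]
    exact (key2 z hz1).deriv
  -- bounds on the sums
  have hS1 : Summable (fun k => F1c c k z) :=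
    Summable.of_norm_bounded hu (fun k => bd1 c hc0 hcnn hcb k z (hball z hz1))
  have e1 : ∑' k, F1c c k z = 1 + ∑' k, F1c c (k+1) z := by
    rw [Summable.tsum_eq_zero_add hS1]
    congr 1
    simp [F1c, hc0]
  have hB1 : ‖∑' k, F1c c (k+1) z‖ ≤ 3/7 := by
    have hg : HasSum (fun k : ℕ => (3/8:ℝ) * (1/8)^k) ((3/8) * (1 - 1/8)⁻¹) :=
      (hasSum_geometric_of_lt_one (by norm_num) (by norm_num)).mul_left _
    have h := tsum_of_norm_bounded hg (fun k => bd3 c hcnn hcb k z hzle)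
    calc ‖∑' k, F1c c (k+1) z‖ ≤ (3/8) * ((1:ℝ) - 1/8)⁻¹ := h
      _ = 3/7 := by norm_num
  have hlow : 4/7 ≤ ‖∑' k, F1c c k z‖ := by
    rw [e1]
    have h1 : ‖(1:ℂ)‖ ≤ ‖1 + ∑' k, F1c c (k+1) z‖ + ‖∑' k, F1c c (k+1) z‖ := by
      calc ‖(1:ℂ)‖ = ‖(1 + ∑' k, F1c c (k+1) z) + (-(∑' k, F1c c (k+1) z))‖ := by congr 1; ring
        _ ≤ ‖1 + ∑' k, F1c c (k+1) z‖ + ‖-(∑' k, F1c c (k+1) z)‖ := norm_add_le _ _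
        _ = ‖1 + ∑' k, F1c c (k+1) z‖ + ‖∑' k, F1c c (k+1) z‖ := by rw [norm_neg]
    rw [norm_one] at h1
    linarith
  have hS2 : Summable (fun k => F2c c k z) :=
    Summable.of_norm_bounded hv (fun k => bd2 c hcnn hcb k z (hball z hz1))
  have hB2 : ‖∑' k, F2c c k z‖ ≤ 1 := by
    rw [Summable.tsum_eq_zero_add hS2]
    have h0 : F2c c 0 z = 0 := by simp [F2c]
    rw [h0, zero_add]
    have hg : HasSum (fun k : ℕ => (3/4:ℝ) * (1/4)^k) ((3/4) * (1 - 1/4)⁻¹) :=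
      (hasSum_geometric_of_lt_one (by norm_num) (by norm_num)).mul_left _
    have h := tsum_of_norm_bounded hg (fun k => bd4 c hcnn hcb k z hzle)
    calc ‖∑' k, F2c c (k+1) z‖ ≤ (3/4) * ((1:ℝ) - 1/4)⁻¹ := h
      _ = 1 := by norm_num
  -- conclude
  rw [keyd2, keyd1 z hz1]
  set s1 := ∑' k, F1c c k z with hs1
  set s2 := ∑' k, F2c c k z with hs2
  have hw : ‖z * s2 / s1‖ ≤ 7/8 := by
    rw [norm_div, norm_mul]
    have hnum : ‖z‖ * ‖s2‖ ≤ 1/2 := by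
      calc ‖z‖ * ‖s2‖ ≤ (1/2) * 1 :=
            mul_le_mul hzle hB2 (norm_nonneg _) (by norm_num)
        _ = 1/2 := by norm_num
    calc ‖z‖ * ‖s2‖ / ‖s1‖ ≤ (1/2) / (4/7) :=
          div_le_div₀ (by norm_num) hnum (by norm_num) hlow
      _ = 7/8 := by norm_num
  have hre : |(z * s2 / s1).re| ≤ 7/8 := le_trans (Complex.abs_re_le_norm _) hw
  have habs := abs_le.1 hre
  have : (1 + z * s2 / s1).re = 1 + (z * s2 / s1).re := by simp
  rw [this]
  linarith [habs.1]


theorem hypergeom_convex_half (p : ℕ) (hp : 1 ≤ p) (a b : Fin p → ℝ)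
    (ha : ∀ i, 0 < a i)
    (hb : ∀ i, (a i - 1 + Real.sqrt ((a i + 1) ^ 2 +
      4 * a i * (Real.exp 1 - 1) * (a i + 1))) / 2 < b i)
    (f : ℂ → ℂ)
    (hf : ∀ z : ℂ, f z = ∑' k : ℕ,
      ((∏ i, Real.Gamma (a i + k) / Real.Gamma (a i)) /
        ((Nat.factorial (k + 1) : ℝ) * ∏ i, Real.Gamma (b i + k) / Real.Gamma (b i)) : ℝ) *
        z ^ (k + 1) / (Nat.factorial k : ℂ)) :
    (∀ i, 0 < b i ^ 2 + (1 - a i) * b i +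
        a i * (-1 + (1 - Real.exp 1) * (a i + 1))) ∧
      (∀ z : ℂ, ‖z‖ < 1 / 2 → 0 < (1 + z * deriv (deriv f) z / deriv f z).re) := by
  have hIdx := fun i => index_ineq (a i) (b i) (ha i) (hb i)
  have hab : ∀ i, a i < b i := fun i => (hIdx i).2.1
  have hbpos : ∀ i, 0 < b i := fun i => lt_trans (ha i) (hab i)
  refine ⟨fun i => (hIdx i).1, ?_⟩
  intro z hz
  set c : ℕ → ℝ := fun k =>
    ((∏ i, Real.Gamma (a i + k) / Real.Gamma (a i)) /
      ((Nat.factorial (k + 1) : ℝ) * ∏ i, Real.Gamma (b i + k) / Real.Gamma (b i)) : ℝ)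
    with hc
  have hck : ∀ k, c k = (∏ i, rr (a i) (b i) k) / (Nat.factorial (k+1) : ℝ) := by
    intro k
    rw [hc]
    have hprod : ∏ i, rr (a i) (b i) k =
        (∏ i, Real.Gamma (a i + k) / Real.Gamma (a i)) /
          (∏ i, Real.Gamma (b i + k) / Real.Gamma (b i)) := by
      rw [← Finset.prod_div_distrib]; rfl
    rw [hprod]
    have hBne : (∏ i, Real.Gamma (b i + k) / Real.Gamma (b i)) ≠ 0 := by
      apply ne_of_gt
      apply Finset.prod_pos
      intro i _
      exact div_pos (Gamma_shift_pos (hbpos i) k) (Real.Gamma_pos_of_pos (hbpos i))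
    have hFne : ((Nat.factorial (k+1) : ℝ)) ≠ 0 := by
      exact_mod_cast (Nat.factorial_pos (k+1)).ne'
    field_simp
  have hrrpos : ∀ (i : Fin p) (k : ℕ), 0 < rr (a i) (b i) k :=
    fun i k => rr_pos (ha i) (hbpos i) k
  have hc0 : c 0 = 1 := by
    rw [hck 0]
    have : ∏ i, rr (a i) (b i) 0 = 1 := by
      apply Finset.prod_eq_one
      intro i _
      exact rr_zero _ _ (ha i) (hbpos i)
    rw [this]
    simp
  have hcnn : ∀ k, 0 ≤ c k := by
    intro k
    rw [hck k]
    have h1 : 0 < ∏ i, rr (a i) (b i) k := Finset.prod_pos (fun i _ => hrrpos i k)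
    positivity
  have hcb : ∀ k, 1 ≤ k → c k ≤ (3/4) / (Nat.factorial (k+1) : ℝ) := by
    intro k hk
    rw [hck k]
    have hFpos : (0:ℝ) < (Nat.factorial (k+1) : ℝ) := by
      exact_mod_cast Nat.factorial_pos (k+1)
    have i0 : Fin p := ⟨0, hp⟩
    have hsplit : ∏ i, rr (a i) (b i) k =
        rr (a i0) (b i0) k * ∏ i ∈ Finset.univ.erase i0, rr (a i) (b i) k :=
      (Finset.mul_prod_erase Finset.univ _ (Finset.mem_univ i0)).symm
    have herase : ∏ i ∈ Finset.univ.erase i0, rr (a i) (b i) k ≤ 1 :=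
      Finset.prod_le_one (fun i _ => (hrrpos i k).le)
        (fun i _ => rr_le_one (ha i) (hab i) k)
    have h0 : rr (a i0) (b i0) k ≤ a i0 / b i0 := rr_le_ratio (ha i0) (hab i0) k hk
    have hr34 : a i0 / b i0 ≤ 3/4 := by
      rw [div_le_iff₀ (hbpos i0)]
      have := (hIdx i0).2.2
      linarith
    have hprodle : ∏ i, rr (a i) (b i) k ≤ 3/4 := by
      rw [hsplit]
      calc rr (a i0) (b i0) k * ∏ i ∈ Finset.univ.erase i0, rr (a i) (b i) k
          ≤ (3/4) * 1 :=
            mul_le_mul (le_trans h0 hr34) herase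
              (Finset.prod_nonneg (fun i _ => (hrrpos i k).le)) (by norm_num)
        _ = 3/4 := by norm_num
    gcongr
  exact core c hc0 hcnn hcb f hf z hz
end
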